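/- arXiv:2206.02201 — 15 statements merged into one kernel-verified Lean document; each statement's English description precedes it below -/
import Mathlib

section
/- For all natural numbers k and all complex ρ: (2k)!/k! · (1+ρ)^k = Σ_{j=0}^{k} C(2k,2j) · (1+ρ)^{2k-2j} · (1-ρ²)^j · (2j-1)!! · (2k-2j-1)!!. -/
open Finset

lemma fact_two_mul_aux (j : ℕ) :
    (2 * j).factorial = 2 ^ j * j.factorial * Nat.doubleFactorial (2 * j - 1) := by
  cases j with
  | zero => simp [Nat.doubleFactorial]
  | succ n =>
    have h : 2 * (n + 1) = (2 * n + 1) + 1 := by ring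
    rw [h, Nat.factorial_eq_mul_doubleFactorial]
    have h2 : 2 * n + 1 + 1 = 2 * (n + 1) := by ring
    rw [h2, Nat.doubleFactorial_two_mul]
    have h3 : 2 * (n + 1) - 1 = 2 * n + 1 := by omega
    rw [h3]

lemma key_nat (k j : ℕ) (hj : j ≤ k) :
    2 ^ k * k.factorial *
      ((2 * k).choose (2 * j) * Nat.doubleFactorial (2 * j - 1) *
        Nat.doubleFactorial (2 * k - 2 * j - 1)) =
    (2 * k).factorial * k.choose j := by
  have e1 : (2 * j).factorial = 2 ^ j * j.factorial * Nat.doubleFactorial (2 * j - 1) :=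
    fact_two_mul_aux j
  have e2 : (2 * (k - j)).factorial
      = 2 ^ (k - j) * (k - j).factorial * Nat.doubleFactorial (2 * (k - j) - 1) :=
    fact_two_mul_aux (k - j)
  have hkj : 2 * (k - j) = 2 * k - 2 * j := by omega
  rw [hkj] at e2
  have c1 : (2 * k).choose (2 * j) * (2 * j).factorial * (2 * k - 2 * j).factorial
      = (2 * k).factorial := Nat.choose_mul_factorial_mul_factorial (by omega)
  have c2 : k.choose j * j.factorial * (k - j).factorial = k.factorial :=
    Nat.choose_mul_factorial_mul_factorial hj
  have hp : 2 ^ k = 2 ^ j * 2 ^ (k - j) := by rw [← pow_add]; congr 1; omega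
  calc 2 ^ k * k.factorial *
      ((2 * k).choose (2 * j) * Nat.doubleFactorial (2 * j - 1) *
        Nat.doubleFactorial (2 * k - 2 * j - 1))
      = (2 * k).choose (2 * j) *
          (2 ^ j * j.factorial * Nat.doubleFactorial (2 * j - 1)) *
          (2 ^ (k - j) * (k - j).factorial * Nat.doubleFactorial (2 * k - 2 * j - 1)) *
          k.choose j := by
        rw [hp, ← c2]; ring
    _ = (2 * k).choose (2 * j) * (2 * j).factorial * (2 * k - 2 * j).factorial
          * k.choose j := by rw [← e1, ← e2]
    _ = (2 * k).factorial * k.choose j := by rw [c1]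

theorem stmt_0 (k : ℕ) (ρ : ℂ) :
    ((2 * k).factorial : ℂ) / (k.factorial : ℂ) * (1 + ρ) ^ k =
      ∑ j ∈ range (k + 1),
        ((2 * k).choose (2 * j) : ℂ) * (1 + ρ) ^ (2 * k - 2 * j) * (1 - ρ ^ 2) ^ j *
          (Nat.doubleFactorial (2 * j - 1) : ℂ) *
          (Nat.doubleFactorial (2 * k - 2 * j - 1) : ℂ) := by
  have hk : (k.factorial : ℂ) ≠ 0 := Nat.cast_ne_zero.mpr k.factorial_ne_zero
  have h2 : (2 : ℂ) ^ k ≠ 0 := pow_ne_zero _ two_ne_zero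
  have H : (2 : ℂ) ^ k * (k.factorial : ℂ) *
      (∑ j ∈ range (k + 1),
        ((2 * k).choose (2 * j) : ℂ) * (1 + ρ) ^ (2 * k - 2 * j) * (1 - ρ ^ 2) ^ j *
          (Nat.doubleFactorial (2 * j - 1) : ℂ) *
          (Nat.doubleFactorial (2 * k - 2 * j - 1) : ℂ))
      = ((2 * k).factorial : ℂ) * (2 * (1 + ρ)) ^ k := by
    have hexp : (2 * (1 + ρ)) ^ k = ((1 - ρ ^ 2) + (1 + ρ) ^ 2) ^ k := by ring_nf
    rw [hexp, add_pow, Finset.mul_sum, Finset.mul_sum]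
    apply Finset.sum_congr rfl
    intro j hj
    have hjk : j ≤ k := Nat.lt_succ_iff.mp (Finset.mem_range.mp hj)
    have hkey := key_nat k j hjk
    have hcast : (2 : ℂ) ^ k * (k.factorial : ℂ) *
        (((2 * k).choose (2 * j) : ℂ) * (Nat.doubleFactorial (2 * j - 1) : ℂ) *
          (Nat.doubleFactorial (2 * k - 2 * j - 1) : ℂ))
        = ((2 * k).factorial : ℂ) * (k.choose j : ℂ) := by
      exact_mod_cast congrArg (Nat.cast : ℕ → ℂ) hkey
    have hpow : ((1 + ρ) ^ 2) ^ (k - j) = (1 + ρ) ^ (2 * k - 2 * j) := by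
      rw [← pow_mul]; congr 1; omega
    rw [hpow]
    linear_combination (1 + ρ) ^ (2 * k - 2 * j) * (1 - ρ ^ 2) ^ j * hcast
  rw [mul_pow] at H
  rw [div_mul_eq_mul_div, div_eq_iff hk]
  apply mul_left_cancel₀ h2
  linear_combination -H
end

section
/- For all natural numbers k and all complex ρ: (1+ρ)^k = 2^{-k} · Σ_{j=0}^{2k} Σ_{m=0}^{⌊j/2⌋} (2ρ)^{j-2m} · C(k, j-2m) · C(k-j+2m, m). -/
open Finset

theorem stmt_1 (k : ℕ) (ρ : ℂ) :
    (1 + ρ) ^ k =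
      (1 / 2 ^ k : ℂ) *
        ∑ j ∈ range (2 * k + 1), ∑ m ∈ range (j / 2 + 1),
          (2 * ρ) ^ (j - 2 * m) * (k.choose (j - 2 * m) : ℂ) *
            ((k + 2 * m - j).choose m : ℂ) := by
  have key : ∑ j ∈ range (2 * k + 1), ∑ m ∈ range (j / 2 + 1),
      (2 * ρ) ^ (j - 2 * m) * (k.choose (j - 2 * m) : ℂ) *
        ((k + 2 * m - j).choose m : ℂ) = 2 ^ k * (1 + ρ) ^ k := by
    rw [Finset.sum_sigma']
    have step1 : ∑ p ∈ (range (2 * k + 1)).sigma (fun j => range (j / 2 + 1)),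
        (2 * ρ) ^ (p.1 - 2 * p.2) * (k.choose (p.1 - 2 * p.2) : ℂ) *
          ((k + 2 * p.2 - p.1).choose p.2 : ℂ)
        = ∑ q ∈ (range (2 * k + 1)).sigma (fun i => range ((2 * k - i) / 2 + 1)),
        (2 * ρ) ^ q.1 * (k.choose q.1 : ℂ) * ((k - q.1).choose q.2 : ℂ) := by
      apply Finset.sum_nbij' (fun p => ⟨p.1 - 2 * p.2, p.2⟩)
        (fun q => ⟨q.1 + 2 * q.2, q.2⟩)
      · intro p hp
        simp only [Finset.mem_sigma, Finset.mem_range] at hp ⊢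
        omega
      · intro q hq
        simp only [Finset.mem_sigma, Finset.mem_range] at hq ⊢
        omega
      · intro p hp
        simp only [Finset.mem_sigma, Finset.mem_range] at hp
        have : p.1 - 2 * p.2 + 2 * p.2 = p.1 := by omega
        exact Sigma.ext this (by simp)
      · intro q hq
        have : q.1 + 2 * q.2 - 2 * q.2 = q.1 := by omega
        exact Sigma.ext this (by simp)
      · intro p hp
        simp only [Finset.mem_sigma, Finset.mem_range] at hp
        have h1 : k + 2 * p.2 - p.1 = k - (p.1 - 2 * p.2) := by omega
        rw [h1]
    rw [step1, Finset.sum_sigma]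
    have step2 : ∀ i ∈ range (2 * k + 1),
        ∑ m ∈ range ((2 * k - i) / 2 + 1),
          (2 * ρ) ^ i * (k.choose i : ℂ) * ((k - i).choose m : ℂ)
        = (2 * ρ) ^ i * (k.choose i : ℂ) * 2 ^ (k - i) := by
      intro i hi
      rw [← Finset.mul_sum]
      by_cases hik : i ≤ k
      · congr 1
        have hsub : range (k - i + 1) ⊆ range ((2 * k - i) / 2 + 1) := by
          apply Finset.range_subset_range.2; omega
        rw [← Finset.sum_subset hsub (by
          intro x hx hxn
          simp only [Finset.mem_range] at hx hxn
          have : k - i < x := by omega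
          rw [Nat.choose_eq_zero_of_lt this]
          simp)]
        have := Nat.sum_range_choose (k - i)
        exact_mod_cast congrArg (Nat.cast : ℕ → ℂ) this

      · have : (k.choose i : ℂ) = 0 := by
          rw [Nat.choose_eq_zero_of_lt (by omega)]; simp
        simp [this]
    rw [Finset.sum_congr rfl step2]
    have step3 : ∑ i ∈ range (2 * k + 1), (2 * ρ) ^ i * (k.choose i : ℂ) * 2 ^ (k - i)
        = ∑ i ∈ range (k + 1), (2 * ρ) ^ i * (k.choose i : ℂ) * 2 ^ (k - i) := by
      symm
      apply Finset.sum_subset (Finset.range_subset_range.2 (by omega))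
      intro x hx hxn
      simp only [Finset.mem_range] at hx hxn
      rw [Nat.choose_eq_zero_of_lt (by omega)]
      simp
    rw [step3]
    have := Commute.add_pow (Commute.all (2 * ρ) (2 : ℂ)) k
    have h2 : (2 * ρ + 2 : ℂ) ^ k = 2 ^ k * (1 + ρ) ^ k := by
      rw [show (2 * ρ + 2 : ℂ) = 2 * (1 + ρ) by ring, mul_pow]
    rw [← h2, this]
    apply Finset.sum_congr rfl
    intro i _
    ring
  rw [key]
  field_simp
end

section
/- For all natural numbers n, m and all complex β with β not a nonpositive integer: Σ_{j=0}^{n} (-1)^j · C(n,j) · (β)^{(j+m)}/(β)^{(j)} = (-1)^n · n! · C(m,n) · (β)^{(m)}/(β)^{(n)}. -/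
open Finset Polynomial

private lemma poch_ne_zero (β : ℂ) (hβ : ∀ j : ℕ, β ≠ -(j : ℂ)) (k : ℕ) :
    (ascPochhammer ℂ k).eval β ≠ 0 := by
  induction k with
  | zero => simp
  | succ k ih =>
    rw [ascPochhammer_succ_eval]
    refine mul_ne_zero ih fun h => hβ k ?_
    linear_combination h

private lemma poch_split (n m : ℕ) (x : ℂ) :
    (ascPochhammer ℂ (n + m)).eval x =
      (ascPochhammer ℂ n).eval x * (ascPochhammer ℂ m).eval (x + n) := by
  rw [← ascPochhammer_mul, eval_mul, eval_comp, eval_add, eval_X, eval_natCast]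

private lemma poch_diff (k : ℕ) (x : ℂ) :
    (ascPochhammer ℂ k).eval x - (ascPochhammer ℂ k).eval (x + 1) =
      -(k : ℂ) * (ascPochhammer ℂ (k - 1)).eval (x + 1) := by
  cases k with
  | zero => simp
  | succ k =>
    have h1 : (ascPochhammer ℂ (k + 1)).eval x = x * (ascPochhammer ℂ k).eval (x + 1) := by
      rw [ascPochhammer_succ_left, eval_mul, eval_X, eval_comp, eval_add, eval_X, eval_one]
    rw [h1, ascPochhammer_succ_eval, Nat.add_sub_cancel]
    push_cast
    ring

private lemma key_split (n : ℕ) (f : ℕ → ℂ) :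
    ∑ j ∈ range (n + 2), (-1 : ℂ) ^ j * ((n + 1).choose j : ℂ) * f j
      = (∑ j ∈ range (n + 1), (-1 : ℂ) ^ j * (n.choose j : ℂ) * f j)
        - ∑ j ∈ range (n + 1), (-1 : ℂ) ^ j * (n.choose j : ℂ) * f (j + 1) := by
  have h3 : ∑ j ∈ range (n + 2), (-1 : ℂ) ^ j * (n.choose j : ℂ) * f j
      = ∑ j ∈ range (n + 1), (-1 : ℂ) ^ j * (n.choose j : ℂ) * f j := by
    rw [Finset.sum_range_succ, Nat.choose_succ_self]
    simp
  rw [Finset.sum_range_succ' _ (n + 1)]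
  have hterm : ∀ j, (-1 : ℂ) ^ (j + 1) * (((n + 1).choose (j + 1) : ℕ) : ℂ) * f (j + 1)
      = (-1 : ℂ) ^ (j + 1) * (n.choose j : ℂ) * f (j + 1)
        + (-1 : ℂ) ^ (j + 1) * (n.choose (j + 1) : ℂ) * f (j + 1) := by
    intro j
    rw [Nat.choose_succ_succ]
    push_cast
    ring
  rw [Finset.sum_congr rfl fun j _ => hterm j, Finset.sum_add_distrib]
  have hB : (∑ j ∈ range (n + 1), (-1 : ℂ) ^ (j + 1) * (n.choose (j + 1) : ℂ) * f (j + 1))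
        + (-1 : ℂ) ^ 0 * (n.choose 0 : ℂ) * f 0
      = ∑ j ∈ range (n + 1), (-1 : ℂ) ^ j * (n.choose j : ℂ) * f j := by
    rw [← h3, Finset.sum_range_succ' (fun j => (-1 : ℂ) ^ j * (n.choose j : ℂ) * f j) (n + 1)]
  have hA : ∑ j ∈ range (n + 1), (-1 : ℂ) ^ (j + 1) * (n.choose j : ℂ) * f (j + 1)
      = - ∑ j ∈ range (n + 1), (-1 : ℂ) ^ j * (n.choose j : ℂ) * f (j + 1) := by
    rw [← Finset.sum_neg_distrib]
    exact Finset.sum_congr rfl fun j _ => by ring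
  simp only [pow_zero, Nat.choose_zero_right, Nat.cast_one, one_mul] at hB ⊢
  linear_combination hA + hB

private lemma prod_zero_of_lt {m n : ℕ} (h : m < n) :
    ∏ i ∈ range n, ((m : ℂ) - (i : ℂ)) = 0 := by
  refine Finset.prod_eq_zero (Finset.mem_range.mpr h) ?_
  simp

private lemma aux_sum (n : ℕ) : ∀ (m : ℕ) (γ : ℂ),
    ∑ j ∈ range (n + 1), (-1 : ℂ) ^ j * (n.choose j : ℂ) * (ascPochhammer ℂ m).eval (γ + j)
      = (-1 : ℂ) ^ n * (∏ i ∈ range n, ((m : ℂ) - (i : ℂ)))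
        * (ascPochhammer ℂ (m - n)).eval (γ + n) := by
  induction n with
  | zero => intro m γ; simp
  | succ n ih =>
    intro m γ
    have hk := key_split n (fun j => (ascPochhammer ℂ m).eval (γ + (j : ℂ)))
    rw [show n + 1 + 1 = n + 2 from rfl, hk, ih m γ]
    have hshift : ∀ j : ℕ, γ + ((j + 1 : ℕ) : ℂ) = (γ + 1) + (j : ℂ) := by
      intro j; push_cast; ring
    have : ∑ j ∈ range (n + 1), (-1 : ℂ) ^ j * (n.choose j : ℂ)
          * (ascPochhammer ℂ m).eval (γ + ((j + 1 : ℕ) : ℂ))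
        = ∑ j ∈ range (n + 1), (-1 : ℂ) ^ j * (n.choose j : ℂ)
          * (ascPochhammer ℂ m).eval ((γ + 1) + (j : ℂ)) := by
      exact Finset.sum_congr rfl fun j _ => by rw [hshift j]
    rw [this, ih m (γ + 1)]
    have hdiff := poch_diff (m - n) (γ + (n : ℂ))
    have h1 : (γ + 1) + (n : ℂ) = (γ + (n : ℂ)) + 1 := by ring
    have h2 : γ + ((n + 1 : ℕ) : ℂ) = (γ + (n : ℂ)) + 1 := by push_cast; ring
    rw [h1, h2]
    have hsub : m - (n + 1) = m - n - 1 := by omega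
    rw [hsub, Finset.prod_range_succ]
    by_cases hmn : n ≤ m
    · have hc : ((m - n : ℕ) : ℂ) = (m : ℂ) - (n : ℂ) := by
        push_cast [Nat.cast_sub hmn]; ring
      calc (-1 : ℂ) ^ n * (∏ i ∈ range n, ((m : ℂ) - (i : ℂ)))
              * (ascPochhammer ℂ (m - n)).eval (γ + (n : ℂ))
            - (-1 : ℂ) ^ n * (∏ i ∈ range n, ((m : ℂ) - (i : ℂ)))
              * (ascPochhammer ℂ (m - n)).eval ((γ + (n : ℂ)) + 1)
          = (-1 : ℂ) ^ n * (∏ i ∈ range n, ((m : ℂ) - (i : ℂ)))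
            * ((ascPochhammer ℂ (m - n)).eval (γ + (n : ℂ))
              - (ascPochhammer ℂ (m - n)).eval ((γ + (n : ℂ)) + 1)) := by ring
        _ = (-1 : ℂ) ^ n * (∏ i ∈ range n, ((m : ℂ) - (i : ℂ)))
            * (-((m - n : ℕ) : ℂ) * (ascPochhammer ℂ (m - n - 1)).eval ((γ + (n : ℂ)) + 1)) := by
            rw [hdiff]
        _ = (-1 : ℂ) ^ (n + 1) * ((∏ i ∈ range n, ((m : ℂ) - (i : ℂ))) * ((m : ℂ) - (n : ℂ)))
            * (ascPochhammer ℂ (m - n - 1)).eval ((γ + (n : ℂ)) + 1) := by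
            rw [hc]; ring
    · have h0 : ∏ i ∈ range n, ((m : ℂ) - (i : ℂ)) = 0 := prod_zero_of_lt (by omega)
      rw [h0]
      ring

theorem stmt_2 (n m : ℕ) (β : ℂ) (hβ : ∀ j : ℕ, β ≠ -(j : ℂ)) :
    ∑ j ∈ range (n + 1),
        (-1 : ℂ) ^ j * (n.choose j : ℂ) *
          ((ascPochhammer ℂ (j + m)).eval β / (ascPochhammer ℂ j).eval β) =
      (-1 : ℂ) ^ n * (n.factorial : ℂ) * (m.choose n : ℂ) *
        ((ascPochhammer ℂ m).eval β / (ascPochhammer ℂ n).eval β) := by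
  have hne := poch_ne_zero β hβ
  have hterm : ∀ j : ℕ, (ascPochhammer ℂ (j + m)).eval β / (ascPochhammer ℂ j).eval β
      = (ascPochhammer ℂ m).eval (β + j) := by
    intro j
    rw [poch_split j m β, mul_comm, mul_div_assoc, div_self (hne j), mul_one]
  calc ∑ j ∈ range (n + 1), (-1 : ℂ) ^ j * (n.choose j : ℂ) *
          ((ascPochhammer ℂ (j + m)).eval β / (ascPochhammer ℂ j).eval β)
      = ∑ j ∈ range (n + 1), (-1 : ℂ) ^ j * (n.choose j : ℂ) *
          (ascPochhammer ℂ m).eval (β + j) :=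
        Finset.sum_congr rfl fun j _ => by rw [hterm j]
    _ = (-1 : ℂ) ^ n * (∏ i ∈ range n, ((m : ℂ) - (i : ℂ)))
          * (ascPochhammer ℂ (m - n)).eval (β + n) := aux_sum n m β
    _ = (-1 : ℂ) ^ n * (n.factorial : ℂ) * (m.choose n : ℂ) *
          ((ascPochhammer ℂ m).eval β / (ascPochhammer ℂ n).eval β) := by
        by_cases hmn : n ≤ m
        · have hprod : ∏ i ∈ range n, ((m : ℂ) - (i : ℂ))
              = (n.factorial : ℂ) * (m.choose n : ℂ) := by
            have : ∀ k, k ≤ m → ∏ i ∈ range k, ((m : ℂ) - (i : ℂ)) = (m.descFactorial k : ℂ) := by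
              intro k
              induction k with
              | zero => simp
              | succ k ihk =>
                intro hk
                rw [Finset.prod_range_succ, ihk (by omega), Nat.descFactorial_succ]
                push_cast [Nat.cast_sub (show k ≤ m by omega)]
                ring
            rw [this n hmn, Nat.descFactorial_eq_factorial_mul_choose]
            push_cast
            ring
          have hsplit : (ascPochhammer ℂ m).eval β
              = (ascPochhammer ℂ n).eval β * (ascPochhammer ℂ (m - n)).eval (β + n) := by
            conv_lhs => rw [show m = n + (m - n) by omega]
            exact poch_split n (m - n) β
          rw [hprod, hsplit, mul_div_cancel_left₀ _ (hne n)]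
          ring
        · rw [prod_zero_of_lt (by omega), Nat.choose_eq_zero_of_lt (by omega)]
          simp
end

section
/- For all natural numbers n, all complex ρ and all complex β not a nonpositive integer: Σ_{m=0}^{n} (-1)^m · C(n,m) · (β)^{(m)} · (β)^{(n-m)} · Σ_{k=0}^{m} C(m,k) · C(n-m,k) · ρ^k · k!/(β)^{(k)} equals 0 if n is odd, and equals (n!/(n/2)!) · (β)^{(n/2)} · (1-ρ)^{n/2} if n is even. -/
/-!
After exchanging the two sums, the coefficient of `ρ ^ k` is `k! / β^{(k)}` times a binomial
convolution `∑ C(n,m) a_m b_{n-m}`, i.e. `n!` times the `n`-th coefficient of a product of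
exponential generating functions. Writing `E_c(γ) = (1 - c X)^{-γ} = ∑ c^m γ^{(m)} X^m / m!`,
the series of `C(m,k) c^m β^{(m)}` is `c^k β^{(k)} / k! · X^k E_c(β + k)`, so the product is a
multiple of `X^{2k} E_{-1}(β + k) E_1(β + k) = X^{2k} E_1(β + k)(X²)`; the last identity is
`(1 + X)^{-γ} (1 - X)^{-γ} = (1 - X²)^{-γ}`. Hence odd `n` give `0`, and for `n = 2s` the sum over
`k` is `(2s)!/s! · β^{(s)} ∑ C(s,k) (-ρ)^k = (2s)!/s! · β^{(s)} (1 - ρ)^s`.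
-/

open Finset PowerSeries
open scoped Nat

theorem Finset.sum_range_succ_sum_range_succ_comm {M : Type*} [AddCommMonoid M] (n : ℕ)
    (f : ℕ → ℕ → M) (hf : ∀ m k, m < k → f m k = 0) :
    ∑ m ∈ range (n + 1), ∑ k ∈ range (m + 1), f m k =
      ∑ k ∈ range (n + 1), ∑ m ∈ range (n + 1), f m k := by
  rw [sum_comm]
  refine sum_congr rfl fun m hm => sum_subset ?_ fun k _ hk => hf m k ?_
  · exact range_subset_range.mpr (by simpa [Nat.lt_succ_iff] using hm)
  · simpa [Nat.lt_succ_iff] using hk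

theorem add_one_pow_eq_sum_range_of_le {R : Type*} [CommSemiring R] (x : R) {s N : ℕ}
    (h : s ≤ N) : (x + 1) ^ s = ∑ k ∈ range (N + 1), x ^ k * s.choose k := by
  rw [add_pow]
  simp only [one_pow, mul_one]
  refine sum_subset (range_subset_range.mpr (by omega)) fun k _ hk => ?_
  simp [Nat.choose_eq_zero_of_lt (by simpa using hk : s < k)]

theorem ascPochhammer_eval_ne_zero {R : Type*} [CommRing R] [IsDomain R] {x : R}
    (hx : ∀ j : ℕ, x ≠ -j) (k : ℕ) : (ascPochhammer R k).eval x ≠ 0 := fun h => by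
  obtain ⟨j, -, hj⟩ := (ascPochhammer_eval_eq_zero_iff k x).mp h
  exact hx j (by rw [hj, neg_neg])

theorem ascPochhammer_eval_add {S : Type*} [CommSemiring S] (x : S) (m k : ℕ) :
    (ascPochhammer S (m + k)).eval x =
      (ascPochhammer S m).eval x * (ascPochhammer S k).eval (x + m) := by
  rw [← ascPochhammer_mul, Polynomial.eval_mul, Polynomial.eval_comp, Polynomial.eval_add,
    Polynomial.eval_X, Polynomial.eval_natCast]

namespace PowerSeries

variable {K : Type*} [Field K] [CharZero K]

theorem factorial_mul_coeff_mk_mul_mk (a b : ℕ → K) (n : ℕ) :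
    (n ! : K) * coeff n (mk (fun m => a m / m !) * mk (fun m => b m / m !)) =
      ∑ m ∈ range (n + 1), (n.choose m : K) * a m * b (n - m) := by
  rw [coeff_mul, Nat.sum_antidiagonal_eq_sum_range_succ_mk, mul_sum]
  refine sum_congr rfl fun m hm => ?_
  rw [Nat.cast_choose K (by simpa [Nat.lt_succ_iff] using hm)]
  simp only [coeff_mk]
  field_simp

/-- The power series `(1 - c X) ^ (-γ)`. -/
noncomputable def pochhammerEGF (c γ : K) : K⟦X⟧ :=
  mk fun m => c ^ m * (ascPochhammer K m).eval γ / m !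

theorem one_sub_C_mul_X_mul_derivative_pochhammerEGF (c γ : K) :
    (1 - C c * X) * d⁄dX K (pochhammerEGF c γ) = C (c * γ) * pochhammerEGF c γ := by
  ext (_ | n)
  all_goals simp only [sub_mul, one_mul, map_sub, mul_assoc, coeff_C_mul, coeff_zero_X_mul,
    coeff_succ_X_mul, coeff_derivative, pochhammerEGF, coeff_mk]
  · simp
  · rw [ascPochhammer_succ_eval (n + 1), Nat.factorial_succ (n + 1)]
    have : ((n + 1 + 1 : ℕ) : K) ≠ 0 := Nat.cast_ne_zero.mpr (Nat.succ_ne_zero _)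
    push_cast at this ⊢
    field_simp
    ring

theorem mk_choose_mul_eq_X_pow_mul_pochhammerEGF (c γ : K) (k : ℕ) :
    mk (fun m => (m.choose k : K) * (c ^ m * (ascPochhammer K m).eval γ) / m !) =
      C (c ^ k * (ascPochhammer K k).eval γ / k !) * X ^ k * pochhammerEGF c (γ + k) := by
  ext m
  rw [mul_assoc, coeff_C_mul, coeff_X_pow_mul', coeff_mk]
  split_ifs with hkm
  · obtain ⟨j, rfl⟩ := Nat.exists_eq_add_of_le hkm
    rw [Nat.cast_choose K hkm, Nat.add_sub_cancel_left, pochhammerEGF, coeff_mk,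
      ascPochhammer_eval_add, pow_add]
    have : ((k + j)! : K) ≠ 0 := Nat.cast_ne_zero.mpr (Nat.factorial_ne_zero _)
    field_simp
  · rw [Nat.choose_eq_zero_of_lt (not_le.mp hkm)]
    simp

theorem coeff_add_two_of_one_sub_X_sq_mul_derivative {f : K⟦X⟧} {a : K}
    (hf : (1 - X ^ 2) * d⁄dX K f = C a * X * f) (N : ℕ) :
    coeff (N + 2) f * (N + 2) = (N + a) * coeff N f := by
  have h := congrArg (coeff (N + 1)) hf
  rcases N with _ | N
  · simp [sub_mul, coeff_derivative, mul_assoc, coeff_X_pow_mul'] at h ⊢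
    linear_combination h
  · simp [sub_mul, coeff_derivative, mul_assoc, coeff_X_pow_mul', coeff_succ_X_mul] at h
    push_cast at h ⊢
    linear_combination h

theorem eq_of_one_sub_X_sq_mul_derivative {f g : K⟦X⟧} {a : K}
    (hf : (1 - X ^ 2) * d⁄dX K f = C a * X * f) (hg : (1 - X ^ 2) * d⁄dX K g = C a * X * g)
    (h₀ : coeff 0 f = coeff 0 g) (h₁ : coeff 1 f = coeff 1 g) : f = g := by
  ext N
  induction N using Nat.twoStepInduction with
  | zero => exact h₀
  | one => exact h₁
  | more N ih _ =>
    have hN : (N : K) + 2 ≠ 0 := by exact_mod_cast (N + 1).succ_ne_zero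
    apply mul_right_cancel₀ hN
    rw [coeff_add_two_of_one_sub_X_sq_mul_derivative hf,
      coeff_add_two_of_one_sub_X_sq_mul_derivative hg, ih]

theorem derivative_expand {R : Type*} [CommRing R] (p : ℕ) (hp : p ≠ 0) (f : R⟦X⟧) :
    d⁄dX R (expand p hp f) = expand p hp (d⁄dX R f) * d⁄dX R (X ^ p) := by
  simp only [expand_apply, derivative_subst (HasSubst.X_pow hp)]

/-- Both sides solve `(1 - X ^ 2) Y' = 2 γ X Y` and agree in their first two coefficients. -/
theorem pochhammerEGF_neg_one_mul_pochhammerEGF_one (γ : K) :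
    pochhammerEGF (-1) γ * pochhammerEGF 1 γ = expand 2 two_ne_zero (pochhammerEGF 1 γ) := by
  have hF := one_sub_C_mul_X_mul_derivative_pochhammerEGF (-1 : K) γ
  have hG := one_sub_C_mul_X_mul_derivative_pochhammerEGF (1 : K) γ
  simp only [map_neg, map_one, one_mul, neg_mul, sub_neg_eq_add] at hF hG
  refine eq_of_one_sub_X_sq_mul_derivative (a := 2 * γ) ?_ ?_ ?_ ?_
  · rw [Derivation.leibniz, smul_eq_mul, smul_eq_mul, map_mul, map_ofNat]
    linear_combination (1 + X) * pochhammerEGF (-1) γ * hG + (1 - X) * pochhammerEGF 1 γ * hF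
  · have hG₂ := congrArg (expand 2 two_ne_zero) hG
    simp only [map_mul, map_sub, map_one, expand_X, expand_C] at hG₂
    rw [derivative_expand, derivative_pow, derivative_X, map_mul, map_ofNat]
    linear_combination (2 * X) * hG₂
  · simp [pochhammerEGF, coeff_mul]
  · simp [pochhammerEGF, coeff_mul, coeff_expand, Nat.antidiagonal_succ]

end PowerSeries

theorem sum_alternating_choose_mul_ascPochhammer {K : Type*} [Field K] [CharZero K]
    (γ : K) (n k : ℕ) :
    ∑ m ∈ range (n + 1), (n.choose m : K) * (m.choose k * ((-1) ^ m * (ascPochhammer K m).eval γ)) *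
        ((n - m).choose k * (ascPochhammer K (n - m)).eval γ) =
      if 2 ∣ n then
        (-1) ^ k * n ! * (n / 2).choose k * (ascPochhammer K k).eval γ *
          (ascPochhammer K (n / 2)).eval γ / (k ! * (n / 2)!)
      else 0 := by
  have hchoose : mk (fun m => (m.choose k : K) * (ascPochhammer K m).eval γ / m !) =
      C ((ascPochhammer K k).eval γ / k !) * X ^ k * pochhammerEGF 1 (γ + k) := by
    simpa using mk_choose_mul_eq_X_pow_mul_pochhammerEGF (1 : K) γ k
  have hprod : C ((-1) ^ k * (ascPochhammer K k).eval γ / k !) * X ^ k *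
        pochhammerEGF (-1) (γ + k) *
      (C ((ascPochhammer K k).eval γ / k !) * X ^ k * pochhammerEGF 1 (γ + k)) =
      C ((-1) ^ k * (ascPochhammer K k).eval γ / k !) * expand 2 two_ne_zero
        (mk (fun m => (m.choose k : K) * (ascPochhammer K m).eval γ / m !)) := by
    rw [hchoose, map_mul, map_mul, expand_C, map_pow, expand_X,
      ← pochhammerEGF_neg_one_mul_pochhammerEGF_one]
    ring
  rw [← factorial_mul_coeff_mk_mul_mk (fun m => m.choose k * ((-1) ^ m * (ascPochhammer K m).eval γ))
    (fun m => m.choose k * (ascPochhammer K m).eval γ), mk_choose_mul_eq_X_pow_mul_pochhammerEGF,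
    hchoose, hprod, coeff_C_mul, coeff_expand, coeff_mk]
  split_ifs
  · field_simp
  · simp

theorem stmt_3 (n : ℕ) (ρ β : ℂ) (hβ : ∀ j : ℕ, β ≠ -(j : ℂ)) :
    ∑ m ∈ range (n + 1),
        (-1 : ℂ) ^ m * (n.choose m : ℂ) * (ascPochhammer ℂ m).eval β *
          (ascPochhammer ℂ (n - m)).eval β *
          ∑ k ∈ range (m + 1),
            (m.choose k : ℂ) * ((n - m).choose k : ℂ) * ρ ^ k * (k.factorial : ℂ) /
              (ascPochhammer ℂ k).eval β =
      if Odd n then 0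
      else (n.factorial : ℂ) / ((n / 2).factorial : ℂ) * (ascPochhammer ℂ (n / 2)).eval β *
        (1 - ρ) ^ (n / 2) := by
  have hinner : ∀ k, ∑ m ∈ range (n + 1), (-1 : ℂ) ^ m * n.choose m * (ascPochhammer ℂ m).eval β *
      (ascPochhammer ℂ (n - m)).eval β *
      (m.choose k * (n - m).choose k * ρ ^ k * k ! / (ascPochhammer ℂ k).eval β) =
      ρ ^ k * k ! / (ascPochhammer ℂ k).eval β * if 2 ∣ n then
        (-1) ^ k * n ! * (n / 2).choose k * (ascPochhammer ℂ k).eval β *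
          (ascPochhammer ℂ (n / 2)).eval β / (k ! * (n / 2)!) else 0 := fun k => by
    rw [← sum_alternating_choose_mul_ascPochhammer, mul_sum]
    exact sum_congr rfl fun m _ => by ring
  simp_rw [mul_sum]
  rw [sum_range_succ_sum_range_succ_comm _ _ fun m k hmk => by simp [Nat.choose_eq_zero_of_lt hmk],
    sum_congr rfl fun k _ => hinner k]
  rcases Nat.even_or_odd n with heven | hodd
  · obtain ⟨s, rfl⟩ := heven.two_dvd
    simp only [if_neg (Nat.not_odd_iff_even.mpr heven), if_pos (dvd_mul_right 2 s),
      Nat.mul_div_cancel_left s two_pos]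
    rw [← neg_add_eq_sub, add_one_pow_eq_sum_range_of_le (-ρ) (by omega : s ≤ 2 * s), mul_sum]
    refine sum_congr rfl fun k _ => ?_
    have := ascPochhammer_eval_ne_zero hβ k
    have : (k ! : ℂ) ≠ 0 := Nat.cast_ne_zero.mpr k.factorial_ne_zero
    field_simp
    ring
  · have hndvd : ¬ 2 ∣ n := Nat.two_dvd_ne_zero.mpr (Nat.odd_iff.mp hodd)
    simp [hodd, hndvd]
end

section
/- For all natural numbers n, all complex ρ and all complex β: Σ_{m=0}^{n} (-1)^{n-m} · C(n,m) · Σ_{j=0}^{m} C(m,j) · (1-ρ)^j · ρ^{m-j} · (β)^{(n-j)} · (β+m-j)^{(j)} equals 0 if n is odd, and equals (n!/(n/2)!) · (β)^{(n/2)} · (1-ρ)^{n/2} if n is even. -/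
/-!
Put m = j + l. For fixed j the sum over l is an alternating binomial sum of shifts of the
rising factorial x ↦ x^{(j)}; read backwards it is ((ρ - 1) - Δ)^p x^{(j)} at x = β + p,
where Δ is the difference with step -1 and p = n - j. Since Δ x^{(j)} = -j x^{(j-1)}, this
produces the terms C(p,b) j(j-1)⋯(j-b+1) (ρ-1)^{p-b} (β+p)^{(j-b)}, and
(β)^{(p)} (β+p)^{(j-b)} = (β)^{(n-b)}. What multiplies (1-ρ)^{n-b} (β)^{(n-b)} is then
C(n,b) b! times the (n-b)-th forward difference of x ↦ C(x,b) at 0, which vanishes unless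
n - b = b.
-/

open Finset Polynomial fwdDiff

variable {R : Type*} [CommRing R]

theorem ascPochhammer_eval_add_nat (a b : ℕ) (x : R) :
    (ascPochhammer R (a + b)).eval x =
      (ascPochhammer R a).eval x * (ascPochhammer R b).eval (x + a) := by
  rw [← ascPochhammer_mul, eval_mul, eval_comp, eval_add, eval_X, eval_natCast]

theorem fwdDiff_neg_one_ascPochhammer (j : ℕ) :
    Δ_[-1] (fun x : R ↦ (ascPochhammer R j).eval x) =
      fun x ↦ -(j : R) * (ascPochhammer R (j - 1)).eval x := by
  ext x
  cases j with
  | zero => simp [fwdDiff]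
  | succ i =>
    rw [fwdDiff, ascPochhammer_succ_eval i x, ascPochhammer_succ_left]
    simp only [eval_mul, eval_X, eval_comp, eval_add, eval_one, Nat.add_sub_cancel]
    push_cast
    ring_nf

theorem fwdDiff_neg_one_iter_ascPochhammer (j b : ℕ) :
    (Δ_[-1])^[b] (fun x : R ↦ (ascPochhammer R j).eval x) =
      fun x ↦ (-1) ^ b * (j.descFactorial b : R) * (ascPochhammer R (j - b)).eval x := by
  induction b with
  | zero => simp
  | succ b ih =>
    rw [Function.iterate_succ_apply', ih]
    ext x
    have step := congrFun (fwdDiff_neg_one_ascPochhammer (R := R) (j - b)) x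
    simp only [fwdDiff] at step ⊢
    rw [Nat.descFactorial_succ, ← Nat.sub_sub, ← mul_sub, step]
    push_cast
    ring

/-- With `E` the shift by `h`, this is `(a + c E)^p = ((a + c) + c Δ)^p`, as `E = 1 + Δ`. -/
theorem sum_choose_mul_shift_eq_sum_fwdDiff_iter {M : Type*} [AddCommMonoid M]
    (h : M) (f : M → R) (a c : R) (p : ℕ) (y : M) :
    ∑ k ∈ range (p + 1), (p.choose k : R) * a ^ (p - k) * c ^ k * f (y + k • h) =
      ∑ b ∈ range (p + 1), (p.choose b : R) * (a + c) ^ (p - b) * c ^ b * (Δ_[h])^[b] f y := by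
  let E : Module.End R (M → R) := LinearMap.funLeft R R (· + h)
  have hE : ∀ (k : ℕ) (g : M → R), (E ^ k) g = fun y ↦ g (y + k • h) := by
    intro k g
    induction k with
    | zero => simp
    | succ k ih =>
      rw [pow_succ', Module.End.mul_apply, ih]
      ext y
      simp [E, LinearMap.funLeft, succ_nsmul', add_assoc]
  have hD : ∀ (b : ℕ) (g : M → R), ((E - 1) ^ b) g = (Δ_[h])^[b] g := by
    intro b g
    rw [Module.End.pow_apply]
    rfl
  have key : (algebraMap R _ c * E + algebraMap R _ a) ^ p =
      (algebraMap R _ c * (E - 1) + algebraMap R _ (a + c)) ^ p := by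
    rw [mul_sub, mul_one, map_add]
    abel_nf
  have expand := congrFun (LinearMap.congr_fun key f) y
  rw [(Algebra.commute_algebraMap_right a _).add_pow,
    (Algebra.commute_algebraMap_right _ _).add_pow] at expand
  simp only [LinearMap.sum_apply, Finset.sum_apply, Module.End.mul_apply,
    Module.algebraMap_end_apply, Module.End.natCast_apply,
    (Algebra.commute_algebraMap_left _ _).mul_pow, ← map_pow, hE, hD,
    fwdDiff_iter_const_smul, Pi.smul_apply] at expand
  simp only [smul_eq_mul, nsmul_eq_mul] at expand
  convert expand using 2 with k - <;> ring

theorem sum_neg_one_pow_choose_mul_pow_mul_ascPochhammer (ρ x : R) (p j : ℕ) :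
    ∑ l ∈ range (p + 1), (-1) ^ (p - l) * (p.choose l : R) * ρ ^ l *
        (ascPochhammer R j).eval (x + l) =
      ∑ b ∈ range (p + 1), (p.choose b : R) * (j.descFactorial b : R) * (ρ - 1) ^ (p - b) *
        (ascPochhammer R (j - b)).eval (x + p) := by
  have shift := sum_choose_mul_shift_eq_sum_fwdDiff_iter (-1)
    (fun y ↦ (ascPochhammer R j).eval y) ρ (-1) p (x + p)
  simp only [fwdDiff_neg_one_iter_ascPochhammer] at shift
  rw [← sum_range_reflect] at shift
  convert shift using 2 with l hl l
  · have hlp : l ≤ p := mem_range_succ_iff.mp hl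
    rw [Nat.add_sub_cancel, Nat.choose_symm hlp, Nat.sub_sub_self hlp, smul_neg, nsmul_one,
      Nat.cast_sub hlp]
    ring_nf
  · have hsq : ((-1 : R) ^ l) ^ 2 = 1 := by rw [← pow_mul, pow_mul', neg_one_sq, one_pow]
    linear_combination (-(p.choose l : R)) * ((ρ - 1) ^ (p - l) * j.descFactorial l *
      (ascPochhammer R (j - l)).eval (x + p)) * hsq

theorem pow_mul_ascPochhammer_mul_sum_neg_one_pow_choose (ρ β : R) (p j : ℕ) :
    (1 - ρ) ^ j * (ascPochhammer R p).eval β *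
        ∑ l ∈ range (p + 1), (-1) ^ (p - l) * (p.choose l : R) * ρ ^ l *
          (ascPochhammer R j).eval (β + l) =
      ∑ b ∈ range (p + 1), (-1) ^ (p - b) * (p.choose b : R) * (j.descFactorial b : R) *
        (1 - ρ) ^ (p + j - b) * (ascPochhammer R (p + j - b)).eval β := by
  rw [sum_neg_one_pow_choose_mul_pow_mul_ascPochhammer, mul_sum]
  refine sum_congr rfl fun b hb ↦ ?_
  rcases le_or_gt b j with hbj | hbj
  · have hbp : b ≤ p := mem_range_succ_iff.mp hb
    rw [show (1 - ρ) ^ (p + j - b) = (1 - ρ) ^ j * (1 - ρ) ^ (p - b) by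
        rw [← pow_add]; congr 1; omega,
      show p + j - b = p + (j - b) by omega, ascPochhammer_eval_add_nat,
      show ρ - 1 = -(1 - ρ) by ring, neg_pow]
    ring
  · simp [Nat.descFactorial_eq_zero_iff_lt.mpr hbj]

theorem Nat.choose_mul_choose_sub_comm {n j : ℕ} (hj : j ≤ n) (b : ℕ) :
    n.choose j * (n - j).choose b = n.choose b * (n - b).choose j := by
  rcases le_or_gt (j + b) n with h | h
  · have hj' := Nat.choose_mul (n := n) (k := j + b) (s := j) (by omega)
    have hb' := Nat.choose_mul (n := n) (k := j + b) (s := b) (by omega)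
    rw [Nat.add_sub_cancel_left] at hj'
    rw [Nat.add_sub_cancel] at hb'
    rw [← hj', ← hb', Nat.choose_symm_add]
  · rw [Nat.choose_eq_zero_of_lt (by omega : n - j < b), mul_zero, eq_comm, mul_eq_zero,
      Nat.choose_eq_zero_iff, Nat.choose_eq_zero_iff]
    omega

theorem sum_neg_one_pow_choose_mul_choose_mul_descFactorial (n b : ℕ) :
    ∑ j ∈ range (n + 1), (-1 : ℤ) ^ (n - j - b) * n.choose j * (n - j).choose b *
        j.descFactorial b = if n = 2 * b then (n.descFactorial b : ℤ) else 0 := by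
  have hdiff := fwdDiff_iter_eq_sum_shift 1 (fun x ↦ x.choose b : ℕ → ℤ) (n - b) 0
  simp only [fwdDiff_iter_choose_zero, zero_add, smul_eq_mul, mul_one] at hdiff
  have hterm : ∀ j ∈ range (n + 1), (-1 : ℤ) ^ (n - j - b) * n.choose j * (n - j).choose b *
      j.descFactorial b = n.choose b * b.factorial *
        ((-1) ^ (n - b - j) * (n - b).choose j * j.choose b) := by
    intro j hj
    have hchoose := congrArg (Nat.cast : ℕ → ℤ)
      (Nat.choose_mul_choose_sub_comm (mem_range_succ_iff.mp hj) b)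
    push_cast at hchoose
    rw [Nat.sub_right_comm, Nat.descFactorial_eq_factorial_mul_choose]
    push_cast
    linear_combination ((-1 : ℤ) ^ (n - b - j) * b.factorial * j.choose b) * hchoose
  rw [sum_congr rfl hterm, ← mul_sum,
    ← sum_subset (range_subset_range.mpr (by omega : n - b + 1 ≤ n + 1)), ← hdiff]
  · simp only [show n - b = b ↔ n = 2 * b by omega, Nat.descFactorial_eq_factorial_mul_choose]
    split_ifs <;> push_cast <;> ring
  · intro j _ hj
    rw [Nat.choose_eq_zero_of_lt (by simpa using hj : n - b < j)]
    simp

theorem sum_range_sum_range_eq_sum_range_sum_range_add {M : Type*} [AddCommMonoid M] (n : ℕ)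
    (F : ℕ → ℕ → M) :
    ∑ m ∈ range (n + 1), ∑ j ∈ range (m + 1), F m j =
      ∑ j ∈ range (n + 1), ∑ l ∈ range (n - j + 1), F (j + l) j := by
  rw [sum_comm' (t' := range (n + 1)) (s' := fun j ↦ Ico j (n + 1))
    (by intro m j; simp only [mem_range, mem_Ico]; omega)]
  refine sum_congr rfl fun j hj ↦ ?_
  rw [sum_Ico_eq_sum_range, Nat.sub_add_comm (mem_range_succ_iff.mp hj)]

theorem sum_range_ite_eq_two_mul {M : Type*} [AddCommMonoid M] (n : ℕ) (f : ℕ → M) :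
    ∑ b ∈ range (n + 1), (if n = 2 * b then f b else 0) = if Odd n then 0 else f (n / 2) := by
  split_ifs with hn
  · exact sum_eq_zero fun b _ ↦ if_neg fun h ↦ Nat.not_even_iff_odd.mpr hn ⟨b, by omega⟩
  · obtain ⟨k, rfl⟩ := Nat.not_odd_iff_even.mp hn
    simp_rw [show ∀ b, k + k = 2 * b ↔ b = k by omega]
    rw [sum_ite_eq', if_pos (mem_range.mpr (by omega)), show (k + k) / 2 = k by omega]

theorem alternating_binomial_sum_ascPochhammer_eq (n : ℕ) (ρ β : R) :
    ∑ m ∈ range (n + 1),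
        (-1 : R) ^ (n - m) * (n.choose m : R) *
          ∑ j ∈ range (m + 1),
            (m.choose j : R) * (1 - ρ) ^ j * ρ ^ (m - j) *
              (ascPochhammer R (n - j)).eval β *
              (ascPochhammer R j).eval (β + (m : R) - (j : R)) =
      if Odd n then 0
      else (n.descFactorial (n / 2) : R) * (ascPochhammer R (n / 2)).eval β *
        (1 - ρ) ^ (n / 2) := by
  calc _ = ∑ j ∈ range (n + 1), (n.choose j : R) *
        ((1 - ρ) ^ j * (ascPochhammer R (n - j)).eval β *
          ∑ l ∈ range (n - j + 1), (-1) ^ (n - j - l) * ((n - j).choose l : R) * ρ ^ l *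
            (ascPochhammer R j).eval (β + l)) := by
        simp_rw [mul_sum]
        rw [sum_range_sum_range_eq_sum_range_sum_range_add]
        refine sum_congr rfl fun j _ ↦ sum_congr rfl fun l _ ↦ ?_
        have hchoose :=
          congrArg (Nat.cast : ℕ → R) (Nat.choose_mul (n := n) (Nat.le_add_right j l))
        rw [Nat.add_sub_cancel_left] at hchoose
        push_cast at hchoose
        rw [Nat.add_sub_cancel_left, Nat.sub_sub, Nat.cast_add,
          show β + (j + l) - j = β + l by ring]
        linear_combination ((-1) ^ (n - (j + l)) * (1 - ρ) ^ j * ρ ^ l *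
          (ascPochhammer R (n - j)).eval β * (ascPochhammer R j).eval (β + l)) * hchoose
    _ = ∑ j ∈ range (n + 1), ∑ b ∈ range (n + 1),
          (((-1 : ℤ) ^ (n - j - b) * n.choose j * (n - j).choose b * j.descFactorial b : ℤ) : R) *
            ((1 - ρ) ^ (n - b) * (ascPochhammer R (n - b)).eval β) := by
        refine sum_congr rfl fun j hj ↦ ?_
        have hjn : j ≤ n := mem_range_succ_iff.mp hj
        rw [pow_mul_ascPochhammer_mul_sum_neg_one_pow_choose, Nat.sub_add_cancel hjn, mul_sum,
          ← sum_subset (range_subset_range.mpr (by omega : n - j + 1 ≤ n + 1))]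
        · refine sum_congr rfl fun b _ ↦ ?_
          rw [Nat.sub_right_comm]
          push_cast
          ring
        · intro b _ hb
          rw [Nat.choose_eq_zero_of_lt (by simpa using hb : n - j < b)]
          simp
    _ = ∑ b ∈ range (n + 1), if n = 2 * b then
          (n.descFactorial b : R) * (ascPochhammer R b).eval β * (1 - ρ) ^ b else 0 := by
        rw [sum_comm]
        simp_rw [← sum_mul, ← Int.cast_sum, sum_neg_one_pow_choose_mul_choose_mul_descFactorial]
        refine sum_congr rfl fun b _ ↦ ?_
        split_ifs with hb
        · rw [show n - b = b by omega]
          push_cast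
          ring
        · simp
    _ = _ := sum_range_ite_eq_two_mul n _

theorem stmt_4 (n : ℕ) (ρ β : ℂ) :
    ∑ m ∈ range (n + 1),
        (-1 : ℂ) ^ (n - m) * (n.choose m : ℂ) *
          ∑ j ∈ range (m + 1),
            (m.choose j : ℂ) * (1 - ρ) ^ j * ρ ^ (m - j) *
              (ascPochhammer ℂ (n - j)).eval β *
              (ascPochhammer ℂ j).eval (β + (m : ℂ) - (j : ℂ)) =
      if Odd n then 0
      else (n.factorial : ℂ) / ((n / 2).factorial : ℂ) * (ascPochhammer ℂ (n / 2)).eval β *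
        (1 - ρ) ^ (n / 2) := by
  rw [alternating_binomial_sum_ascPochhammer_eq]
  split_ifs with hn
  · rfl
  · obtain ⟨k, rfl⟩ := Nat.not_odd_iff_even.mp hn
    have hfac := Nat.factorial_mul_descFactorial (show k ≤ k + k by omega)
    rw [Nat.add_sub_cancel] at hfac
    rw [show (k + k) / 2 = k by omega, ← hfac, Nat.cast_mul,
      mul_div_cancel_left₀ _ (Nat.cast_ne_zero.mpr k.factorial_ne_zero)]
end

section
/- For all natural numbers k: Σ_{j=0}^{k} C(2k,2j) · 5^j · (2j-1)!! · (2k-2j-1)!! = (2k)! · 3^k / k!. -/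
/-!
Since `(2j)! = (2j-1)‼ · 2ʲ · j!`, the `j`-th summand equals `(2k)! / (2ᵏ k!) · C(k, j) · 5ʲ`,
so the binomial theorem sums it to `(2k)! / (2ᵏ k!) · 6ᵏ`.
-/

open Finset

namespace Nat

theorem factorial_two_mul_eq_doubleFactorial_mul (n : ℕ) :
    (2 * n)! = (2 * n - 1)‼ * (2 ^ n * n !) := by
  rw [← doubleFactorial_two_mul]
  rcases n with _ | n
  · rfl
  · rw [show 2 * (n + 1) = 2 * n + 1 + 1 by ring, factorial_eq_mul_doubleFactorial, mul_comm]
    rfl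

theorem choose_two_mul_mul_doubleFactorial_mul_doubleFactorial {j k : ℕ} (hjk : j ≤ k) :
    (2 * k).choose (2 * j) * (2 * j - 1)‼ * (2 * (k - j) - 1)‼ * (2 ^ k * k !) =
      (2 * k)! * k.choose j := by
  have h2 : 2 * k - 2 * j = 2 * (k - j) := by omega
  rw [← choose_mul_factorial_mul_factorial (by omega : 2 * j ≤ 2 * k), h2,
    factorial_two_mul_eq_doubleFactorial_mul, factorial_two_mul_eq_doubleFactorial_mul,
    ← choose_mul_factorial_mul_factorial hjk, ← pow_mul_pow_sub 2 hjk]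
  ring

end Nat

theorem stmt_5 (k : ℕ) :
    ∑ j ∈ range (k + 1),
        ((2 * k).choose (2 * j) : ℚ) * 5 ^ j * (Nat.doubleFactorial (2 * j - 1) : ℚ) *
          (Nat.doubleFactorial (2 * k - 2 * j - 1) : ℚ) =
      ((2 * k).factorial : ℚ) * 3 ^ k / (k.factorial : ℚ) := by
  have summand : ∀ j ∈ range (k + 1),
      ((2 * k).choose (2 * j) : ℚ) * 5 ^ j * (Nat.doubleFactorial (2 * j - 1) : ℚ) *
          (Nat.doubleFactorial (2 * k - 2 * j - 1) : ℚ) =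
        (2 * k).factorial / (2 ^ k * k.factorial) * (5 ^ j * 1 ^ (k - j) * k.choose j) := by
    intro j hj
    have hjk : j ≤ k := Nat.lt_succ_iff.mp (mem_range.mp hj)
    have hnat := congrArg (Nat.cast : ℕ → ℚ)
      (Nat.choose_two_mul_mul_doubleFactorial_mul_doubleFactorial hjk)
    push_cast at hnat
    rw [show 2 * k - 2 * j = 2 * (k - j) by omega, one_pow, mul_one]
    field_simp
    linear_combination hnat
  rw [sum_congr rfl summand, ← mul_sum, ← add_pow]
  field_simp
  rw [← mul_pow]
  norm_num
end

section
/- For all natural numbers k: Σ_{j=0}^{k} C(2k,2j) · (-7)^j · (2j-1)!! · (2k-2j-1)!! = (-1)^k · (2k)! · 3^k / k!. -/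
/-!
Since `(2j)! = 2^j j! (2j-1)‼`, the summand is `(2k-1)‼ · C(k,j) · (-7)^j`, so by the binomial
theorem the sum is `(2k-1)‼ (1 - 7)^k = (2k)! (-6)^k / (2^k k!)`.
-/

open Finset

open scoped Nat

theorem Nat.factorial_two_mul_eq (n : ℕ) : (2 * n)! = 2 ^ n * n ! * (2 * n - 1)‼ := by
  cases n with
  | zero => rfl
  | succ n =>
    rw [show 2 * (n + 1) - 1 = 2 * n + 1 by omega, show 2 * (n + 1) = 2 * n + 1 + 1 by ring,
      Nat.factorial_eq_mul_doubleFactorial, show 2 * n + 1 + 1 = 2 * (n + 1) by ring,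
      Nat.doubleFactorial_two_mul]

-- Both sides times `2 ^ k * j ! * (k - j)!` equal `2 ^ k * k ! * (2 * k - 1)‼`.
theorem Nat.choose_two_mul_mul_doubleFactorial {j k : ℕ} (h : j ≤ k) :
    (2 * k).choose (2 * j) * (2 * j - 1)‼ * (2 * (k - j) - 1)‼ =
      k.choose j * (2 * k - 1)‼ := by
  obtain ⟨m, rfl⟩ := Nat.exists_eq_add_of_le h
  rw [Nat.add_sub_cancel_left]
  have hpos : 0 < 2 ^ (j + m) * j ! * m ! := by positivity
  apply Nat.eq_of_mul_eq_mul_right hpos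
  have hchoose_two_mul :=
    Nat.choose_mul_factorial_mul_factorial (show 2 * j ≤ 2 * (j + m) by omega)
  have hchoose := Nat.choose_mul_factorial_mul_factorial (Nat.le_add_right j m)
  rw [show 2 * (j + m) - 2 * j = 2 * m by omega, Nat.factorial_two_mul_eq (j + m),
    Nat.factorial_two_mul_eq j, Nat.factorial_two_mul_eq m] at hchoose_two_mul
  rw [Nat.add_sub_cancel_left] at hchoose
  calc _ = 2 ^ (j + m) * (j + m)! * (2 * (j + m) - 1)‼ := by rw [← hchoose_two_mul]; ring
    _ = _ := by rw [← hchoose]; ring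

theorem stmt_7 (k : ℕ) :
    ∑ j ∈ range (k + 1),
        ((2 * k).choose (2 * j) : ℚ) * (-7) ^ j * (Nat.doubleFactorial (2 * j - 1) : ℚ) *
          (Nat.doubleFactorial (2 * k - 2 * j - 1) : ℚ) =
      (-1) ^ k * ((2 * k).factorial : ℚ) * 3 ^ k / (k.factorial : ℚ) := by
  have summand : ∀ j ∈ range (k + 1),
      ((2 * k).choose (2 * j) : ℚ) * (-7) ^ j * ((2 * j - 1)‼ : ℚ) *
          ((2 * k - 2 * j - 1)‼ : ℚ) =
        ((2 * k - 1)‼ : ℚ) * ((-7) ^ j * 1 ^ (k - j) * (k.choose j : ℚ)) := by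
    intro j hj
    have hjk : j ≤ k := Nat.lt_succ_iff.mp (mem_range.mp hj)
    rw [show 2 * k - 2 * j = 2 * (k - j) by omega, one_pow, mul_one]
    calc _ = (-7 : ℚ) ^ j *
            ((2 * k).choose (2 * j) * (2 * j - 1)‼ * (2 * (k - j) - 1)‼ : ℕ) := by
          push_cast; ring
      _ = _ := by rw [Nat.choose_two_mul_mul_doubleFactorial hjk]; push_cast; ring
  rw [sum_congr rfl summand, ← mul_sum, ← add_pow, Nat.factorial_two_mul_eq]
  push_cast
  field_simp
  rw [← mul_pow, ← mul_pow]
  norm_num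
end

section
/- For all natural numbers k: (2k)!/k! · L_k = 2^k · Σ_{j=0}^{k} C(2k,2j) · (-1)^j · L_{2k-2j} · (2j-1)!! · (2k-2j-1)!!, where L_n is the n-th Lucas number. -/
open Finset

def lucas : ℕ → ℕ
  | 0 => 2
  | 1 => 1
  | n + 2 => lucas (n + 1) + lucas n

lemma fact_even (n : ℕ) :
    (2 * n).factorial = 2 ^ n * n.factorial * Nat.doubleFactorial (2 * n - 1) := by
  cases n with
  | zero => simp
  | succ m =>
    have h : 2 * (m + 1) = (2 * (m + 1) - 1) + 1 := by omega
    rw [h, Nat.factorial_eq_mul_doubleFactorial, ← h, Nat.doubleFactorial_two_mul]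

lemma term_nat (k j : ℕ) (h : j ≤ k) :
    2 ^ k * ((2 * k).choose (2 * j) * Nat.doubleFactorial (2 * j - 1) *
      Nat.doubleFactorial (2 * (k - j) - 1)) * k.factorial
    = (2 * k).factorial * k.choose j := by
  have hj : 0 < j.factorial * (k - j).factorial := by positivity
  apply Nat.eq_of_mul_eq_mul_right hj
  have e1 : (2 * k).choose (2 * j) * (2 * j).factorial * (2 * k - 2 * j).factorial
      = (2 * k).factorial :=
    Nat.choose_mul_factorial_mul_factorial (by omega)
  have h2 : 2 * k - 2 * j = 2 * (k - j) := by omega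
  rw [h2] at e1
  have e2 : k.choose j * j.factorial * (k - j).factorial = k.factorial :=
    Nat.choose_mul_factorial_mul_factorial h
  have e3 := fact_even j
  have e4 := fact_even (k - j)
  have hpow : 2 ^ k = 2 ^ j * 2 ^ (k - j) := by rw [← pow_add]; congr 1; omega
  calc 2 ^ k * ((2 * k).choose (2 * j) * Nat.doubleFactorial (2 * j - 1) *
        Nat.doubleFactorial (2 * (k - j) - 1)) * k.factorial * (j.factorial * (k - j).factorial)
      = (2 * k).choose (2 * j) * ((2 ^ j * j.factorial * Nat.doubleFactorial (2 * j - 1)) *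
          (2 ^ (k - j) * (k - j).factorial * Nat.doubleFactorial (2 * (k - j) - 1)))
          * k.factorial := by rw [hpow]; ring
    _ = (2 * k).choose (2 * j) * ((2 * j).factorial * (2 * (k - j)).factorial) * k.factorial := by
          rw [← e3, ← e4]
    _ = (2 * k).factorial * k.factorial := by rw [← e1]; ring
    _ = (2 * k).factorial * (k.choose j * j.factorial * (k - j).factorial) := by rw [e2]
    _ = (2 * k).factorial * k.choose j * (j.factorial * (k - j).factorial) := by ring

lemma lucas_sum (k : ℕ) : ∀ m : ℕ,
    ∑ j ∈ range (k + 1), (-1 : ℚ) ^ j * (k.choose j : ℚ) * (lucas (2 * (k - j) + m) : ℚ)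
      = (lucas (k + m) : ℚ) := by
  induction k with
  | zero => intro m; simp
  | succ k ih =>
    intro m
    rw [Finset.sum_range_succ' _ (k + 1)]
    have hstep : ∀ j ∈ range (k + 1),
        (-1 : ℚ) ^ (j + 1) * ((k + 1).choose (j + 1) : ℚ) * (lucas (2 * (k + 1 - (j + 1)) + m) : ℚ)
        = (-1 : ℚ) ^ (j + 1) * (k.choose (j + 1) : ℚ) * (lucas (2 * (k - (j + 1)) + (m + 2)) : ℚ)
          + (- ((-1 : ℚ) ^ j * (k.choose j : ℚ) * (lucas (2 * (k - j) + m) : ℚ))) := by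
      intro j hj
      simp only [mem_range] at hj
      rw [Nat.choose_succ_succ]
      have h1 : k + 1 - (j + 1) = k - j := by omega
      rcases eq_or_lt_of_le (Nat.lt_succ_iff.mp hj) with rfl | hlt
      · simp [h1, pow_succ]
      · have h2 : 2 * (k - j) + m = 2 * (k - (j + 1)) + (m + 2) := by omega
        rw [h1, h2]
        push_cast
        ring
    rw [Finset.sum_congr rfl hstep, Finset.sum_add_distrib]
    have hA : ∑ j ∈ range (k + 1),
        (-1 : ℚ) ^ (j + 1) * (k.choose (j + 1) : ℚ) * (lucas (2 * (k - (j + 1)) + (m + 2)) : ℚ)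
        = (lucas (k + (m + 2)) : ℚ)
        - (-1 : ℚ) ^ 0 * (k.choose 0 : ℚ) * (lucas (2 * (k - 0) + (m + 2)) : ℚ) := by
      rw [eq_sub_iff_add_eq, ← Finset.sum_range_succ' (fun j =>
        (-1 : ℚ) ^ j * (k.choose j : ℚ) * (lucas (2 * (k - j) + (m + 2)) : ℚ)) (k + 1),
        Finset.sum_range_succ]
      have hz : (-1 : ℚ) ^ (k + 1) * (k.choose (k + 1) : ℚ)
          * (lucas (2 * (k - (k + 1)) + (m + 2)) : ℚ) = 0 := by
        simp [Nat.choose_succ_self]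
      rw [hz, add_zero]
      exact ih (m + 2)
    have hB : ∑ j ∈ range (k + 1),
        -((-1 : ℚ) ^ j * (k.choose j : ℚ) * (lucas (2 * (k - j) + m) : ℚ))
        = -(lucas (k + m) : ℚ) := by
      rw [Finset.sum_neg_distrib, ih m]
    rw [hA, hB]
    have i2 : 2 * (k + 1 - 0) + m = 2 * k + m + 2 := by omega
    have i3 : k + (m + 2) = k + m + 2 := by omega
    have i4 : 2 * (k - 0) + (m + 2) = 2 * k + m + 2 := by omega
    have i5 : k + 1 + m = k + m + 1 := by omega
    rw [i2, i3, i4, i5]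
    have hrec : lucas (k + m + 2) = lucas (k + m + 1) + lucas (k + m) := rfl
    rw [hrec]
    push_cast
    simp only [Nat.choose_zero_right, Nat.cast_one]
    ring

theorem stmt_8 (k : ℕ) :
    ((2 * k).factorial : ℚ) / (k.factorial : ℚ) * (lucas k : ℚ) =
      (2 ^ k : ℚ) *
        ∑ j ∈ range (k + 1),
          ((2 * k).choose (2 * j) : ℚ) * (-1) ^ j * (lucas (2 * k - 2 * j) : ℚ) *
            (Nat.doubleFactorial (2 * j - 1) : ℚ) *
            (Nat.doubleFactorial (2 * k - 2 * j - 1) : ℚ) := by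
  have hk : (k.factorial : ℚ) ≠ 0 := by positivity
  rw [div_mul_eq_mul_div, div_eq_iff hk]
  have hterm : ∀ j ∈ range (k + 1),
      ((2 * k).factorial : ℚ) *
          ((-1 : ℚ) ^ j * (k.choose j : ℚ) * (lucas (2 * (k - j) + 0) : ℚ))
      = (k.factorial : ℚ) * (2 ^ k : ℚ) *
        (((2 * k).choose (2 * j) : ℚ) * (-1) ^ j * (lucas (2 * k - 2 * j) : ℚ) *
          (Nat.doubleFactorial (2 * j - 1) : ℚ) *
          (Nat.doubleFactorial (2 * k - 2 * j - 1) : ℚ)) := by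
    intro j hj
    simp only [mem_range] at hj
    have h : j ≤ k := by omega
    have h2 : 2 * (k - j) = 2 * k - 2 * j := by omega
    have ht := term_nat k j h
    have hc : ((2 ^ k * ((2 * k).choose (2 * j) * Nat.doubleFactorial (2 * j - 1) *
        Nat.doubleFactorial (2 * (k - j) - 1)) * k.factorial : ℕ) : ℚ)
        = (((2 * k).factorial * k.choose j : ℕ) : ℚ) := by rw [ht]
    push_cast at hc
    rw [h2] at hc
    rw [add_zero, h2]
    linear_combination ((-1 : ℚ) ^ j * (lucas (2 * k - 2 * j) : ℚ)) * hc.symm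
  have hs := lucas_sum k 0
  have hk0 : lucas (k + 0) = lucas k := by rw [Nat.add_zero]
  calc ((2 * k).factorial : ℚ) * (lucas k : ℚ)
      = ((2 * k).factorial : ℚ) * ∑ j ∈ range (k + 1),
          (-1 : ℚ) ^ j * (k.choose j : ℚ) * (lucas (2 * (k - j) + 0) : ℚ) := by rw [hs, hk0]
    _ = ∑ j ∈ range (k + 1), ((2 * k).factorial : ℚ) *
          ((-1 : ℚ) ^ j * (k.choose j : ℚ) * (lucas (2 * (k - j) + 0) : ℚ)) := by
          rw [Finset.mul_sum]
    _ = ∑ j ∈ range (k + 1), (k.factorial : ℚ) * (2 ^ k : ℚ) *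
          (((2 * k).choose (2 * j) : ℚ) * (-1) ^ j * (lucas (2 * k - 2 * j) : ℚ) *
            (Nat.doubleFactorial (2 * j - 1) : ℚ) *
            (Nat.doubleFactorial (2 * k - 2 * j - 1) : ℚ)) := Finset.sum_congr rfl hterm
    _ = (k.factorial : ℚ) * (2 ^ k : ℚ) * ∑ j ∈ range (k + 1),
          (((2 * k).choose (2 * j) : ℚ) * (-1) ^ j * (lucas (2 * k - 2 * j) : ℚ) *
            (Nat.doubleFactorial (2 * j - 1) : ℚ) *
            (Nat.doubleFactorial (2 * k - 2 * j - 1) : ℚ)) := by rw [Finset.mul_sum]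
    _ = _ := by ring
end

section
/- For all natural numbers k: (2k)!/k! · F_k = 2^k · Σ_{j=0}^{k} C(2k,2j) · (-1)^j · F_{2k-2j} · (2j-1)!! · (2k-2j-1)!!, where F_n is the n-th Fibonacci number. -/
open Finset

lemma fact_two_mul_df (n : ℕ) : (2 * n).factorial = 2 ^ n * n.factorial * (2 * n - 1).doubleFactorial := by
  cases n with
  | zero => rfl
  | succ m =>
    have h : 2 * (m + 1) = (2 * m + 1) + 1 := by ring
    rw [h, Nat.factorial_eq_mul_doubleFactorial]
    have h2 : 2 * m + 1 + 1 = 2 * (m + 1) := by ring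
    have h3 : 2 * (m + 1) - 1 = 2 * m + 1 := by omega
    rw [h2, Nat.doubleFactorial_two_mul, h3]

lemma aux2 (k : ℕ) : ∀ m : ℕ, ∑ j ∈ range (k + 1), (-1 : ℚ) ^ j * (k.choose j) * Nat.fib (2 * j + m) = (-1 : ℚ) ^ k * Nat.fib (k + m) := by
  induction k with
  | zero => intro m; simp
  | succ k ih =>
    intro m
    rw [Finset.sum_range_succ']
    have hf0 : (-1 : ℚ) ^ 0 * ((k+1).choose 0) * Nat.fib (2 * 0 + m) = Nat.fib m := by simp
    rw [hf0]
    have hsplit : ∀ i ∈ range (k + 1),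
        (-1 : ℚ) ^ (i+1) * ((k+1).choose (i+1)) * Nat.fib (2 * (i+1) + m)
        = -((-1 : ℚ) ^ i * (k.choose i) * Nat.fib (2 * i + (m + 2)))
          - (-1 : ℚ) ^ i * (k.choose (i+1)) * Nat.fib (2 * i + (m + 2)) := by
      intro i _
      have hc : ((k+1).choose (i+1) : ℚ) = (k.choose i : ℚ) + (k.choose (i+1) : ℚ) := by
        exact_mod_cast congrArg (Nat.cast (R := ℚ)) (Nat.choose_succ_succ k i)
      have hi : 2 * (i + 1) + m = 2 * i + (m + 2) := by ring
      rw [hc, hi, pow_succ]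
      ring
    rw [Finset.sum_congr rfl hsplit, Finset.sum_sub_distrib, Finset.sum_neg_distrib, ih (m + 2)]
    -- second sum: ∑_{i<k+1} (-1)^i C(k,i+1) fib(2i+m+2)
    have hB : ∑ i ∈ range (k + 1), (-1 : ℚ) ^ i * (k.choose (i+1)) * Nat.fib (2 * i + (m + 2))
        = -((-1 : ℚ) ^ k * Nat.fib (k + m)) + Nat.fib m := by
      have hS := ih m
      rw [Finset.sum_range_succ'] at hS
      have h0 : (-1 : ℚ) ^ 0 * (k.choose 0) * Nat.fib (2 * 0 + m) = Nat.fib m := by simp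
      rw [h0] at hS
      have hcongr : ∀ i ∈ range k,
          (-1 : ℚ) ^ (i+1) * (k.choose (i+1)) * Nat.fib (2 * (i+1) + m)
          = -((-1 : ℚ) ^ i * (k.choose (i+1)) * Nat.fib (2 * i + (m + 2))) := by
        intro i _
        have hi : 2 * (i + 1) + m = 2 * i + (m + 2) := by ring
        rw [hi, pow_succ]; ring
      rw [Finset.sum_congr rfl hcongr, Finset.sum_neg_distrib] at hS
      -- hS : -∑_{i<k} ... + fib m = (-1)^k fib (k+m)
      rw [Finset.sum_range_succ]
      have hlast : (k.choose (k+1) : ℚ) = 0 := by simp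
      rw [hlast]
      have : ∑ i ∈ range k, (-1 : ℚ) ^ i * (k.choose (i+1)) * Nat.fib (2 * i + (m + 2))
          = -((-1 : ℚ) ^ k * Nat.fib (k + m)) + Nat.fib m := by linarith
      rw [this]; ring
    rw [hB]
    have hfib : (Nat.fib (k + (m + 2)) : ℚ) = Nat.fib (k + m + 1) + Nat.fib (k + m) := by
      have : k + (m + 2) = (k + m) + 2 := by ring
      rw [this, Nat.fib_add_two]
      push_cast; ring
    have hfib2 : k + 1 + m = k + m + 1 := by ring
    rw [hfib, hfib2, pow_succ]
    ring

lemma aux3 (k : ℕ) : ∑ j ∈ range (k + 1), (-1 : ℚ) ^ j * (k.choose j) * Nat.fib (2 * (k - j)) = Nat.fib k := by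
  rw [← Finset.sum_range_reflect]
  have hcongr : ∀ j ∈ range (k + 1),
      (-1 : ℚ) ^ (k + 1 - 1 - j) * (k.choose (k + 1 - 1 - j)) * Nat.fib (2 * (k - (k + 1 - 1 - j)))
      = (-1 : ℚ) ^ k * ((-1 : ℚ) ^ j * (k.choose j) * Nat.fib (2 * j + 0)) := by
    intro j hj
    rw [Finset.mem_range] at hj
    have hjk : j ≤ k := by omega
    have h1 : k + 1 - 1 - j = k - j := by omega
    have h2 : k - (k - j) = j := by omega
    have h3 : (-1 : ℚ) ^ (k - j) = (-1 : ℚ) ^ k * (-1 : ℚ) ^ j := by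
      have : (-1 : ℚ) ^ (k - j) * (-1 : ℚ) ^ j = (-1 : ℚ) ^ k := by
        rw [← pow_add, Nat.sub_add_cancel hjk]
      have hu : ((-1 : ℚ) ^ j) * ((-1 : ℚ) ^ j) = 1 := by
        rw [← pow_add]; simp [pow_add, ← two_mul, pow_mul]
      calc (-1 : ℚ) ^ (k - j) = (-1 : ℚ) ^ (k - j) * (((-1 : ℚ) ^ j) * ((-1 : ℚ) ^ j)) := by rw [hu]; ring
        _ = ((-1 : ℚ) ^ (k - j) * (-1 : ℚ) ^ j) * (-1 : ℚ) ^ j := by ring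
        _ = (-1 : ℚ) ^ k * (-1 : ℚ) ^ j := by rw [this]
    rw [h1, h2, h3, Nat.choose_symm hjk, add_zero]
    ring
  rw [Finset.sum_congr rfl hcongr, ← Finset.mul_sum, aux2 k 0]
  rw [← mul_assoc, ← pow_add]
  simp [pow_add, ← two_mul, pow_mul]

theorem stmt_9 (k : ℕ) :
    ((2 * k).factorial : ℚ) / (k.factorial : ℚ) * (Nat.fib k : ℚ) =
      (2 ^ k : ℚ) *
        ∑ j ∈ range (k + 1),
          ((2 * k).choose (2 * j) : ℚ) * (-1) ^ j * (Nat.fib (2 * k - 2 * j) : ℚ) *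
            (Nat.doubleFactorial (2 * j - 1) : ℚ) *
            (Nat.doubleFactorial (2 * k - 2 * j - 1) : ℚ) := by
  rw [Finset.mul_sum]
  have hterm : ∀ j ∈ range (k + 1),
      (2 ^ k : ℚ) * (((2 * k).choose (2 * j) : ℚ) * (-1) ^ j * (Nat.fib (2 * k - 2 * j) : ℚ) *
            (Nat.doubleFactorial (2 * j - 1) : ℚ) *
            (Nat.doubleFactorial (2 * k - 2 * j - 1) : ℚ))
      = ((2 * k).factorial : ℚ) / (k.factorial : ℚ) *
          ((-1 : ℚ) ^ j * (k.choose j) * Nat.fib (2 * (k - j))) := by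
    intro j hj
    rw [Finset.mem_range] at hj
    have hjk : j ≤ k := by omega
    have hsub : 2 * k - 2 * j = 2 * (k - j) := by omega
    -- double factorial identities
    have hdf1 : ((2 * j).factorial : ℚ) = 2 ^ j * j.factorial * ((2 * j - 1).doubleFactorial : ℚ) := by
      exact_mod_cast congrArg (Nat.cast (R := ℚ)) (fact_two_mul_df j)
    have hdf2 : ((2 * (k - j)).factorial : ℚ) = 2 ^ (k - j) * (k - j).factorial * ((2 * (k - j) - 1).doubleFactorial : ℚ) := by
      exact_mod_cast congrArg (Nat.cast (R := ℚ)) (fact_two_mul_df (k - j))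
    have hch1 : ((2 * k).choose (2 * j) : ℚ) = ((2 * k).factorial : ℚ) / (((2 * j).factorial : ℚ) * ((2 * k - 2 * j).factorial : ℚ)) := by
      rw [Nat.cast_choose ℚ (by omega : 2 * j ≤ 2 * k)]
    have hch2 : (k.choose j : ℚ) = (k.factorial : ℚ) / ((j.factorial : ℚ) * ((k - j).factorial : ℚ)) := by
      rw [Nat.cast_choose ℚ hjk]
    have hpow : (2 : ℚ) ^ j * 2 ^ (k - j) = 2 ^ k := by
      rw [← pow_add]; congr 1; omega
    rw [hsub, hch1, hch2, hsub, hdf1, hdf2]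
    have hfj : (j.factorial : ℚ) ≠ 0 := by exact_mod_cast j.factorial_ne_zero
    have hfkj : ((k - j).factorial : ℚ) ≠ 0 := by exact_mod_cast (k - j).factorial_ne_zero
    have hfk : (k.factorial : ℚ) ≠ 0 := by exact_mod_cast k.factorial_ne_zero
    have hd1 : ((2 * j - 1).doubleFactorial : ℚ) ≠ 0 := by
      exact Nat.cast_ne_zero.mpr (Nat.doubleFactorial_pos _).ne'
    have hd2 : ((2 * (k - j) - 1).doubleFactorial : ℚ) ≠ 0 := by
      exact Nat.cast_ne_zero.mpr (Nat.doubleFactorial_pos _).ne'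
    field_simp
    rw [← hpow]
  rw [Finset.sum_congr rfl hterm, ← Finset.mul_sum, aux3]
end

section
/- For all natural numbers n and k: Σ_{j=0}^{n} (-1)^{n-j} · C(n,j) · (2n+2k+2j-1)!!/(2j-1)!! = 2^n · (n+k)! · (2n+2k-1)!! / (k! · (2n-1)!!). -/
open Finset

/-- rising factorial on ℚ -/
def rf (x : ℚ) : ℕ → ℚ
  | 0 => 1
  | m + 1 => rf x m * (x + m)

lemma rf_succ' (y : ℚ) (m : ℕ) : rf y (m + 1) = y * rf (y + 1) m := by
  induction m with
  | zero => simp [rf]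
  | succ m ih =>
    show rf y (m + 1) * (y + ((m + 1 : ℕ) : ℚ)) = y * (rf (y + 1) m * (y + 1 + (m : ℚ)))
    rw [ih]; push_cast; ring

lemma rf_shift (y : ℚ) (m : ℕ) : rf (y + 1) (m + 1) - rf y (m + 1) = (m + 1) * rf (y + 1) m := by
  rw [rf_succ' y]
  show rf (y + 1) m * (y + 1 + (m : ℚ)) - y * rf (y + 1) m = ((m : ℚ) + 1) * rf (y + 1) m
  ring

lemma diff_sum (n : ℕ) (g : ℕ → ℚ) :
    ∑ j ∈ range (n + 2), (-1 : ℚ) ^ j * ((n + 1).choose j) * g j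
      = - ∑ j ∈ range (n + 1), (-1 : ℚ) ^ j * (n.choose j) * (g (j + 1) - g j) := by
  simp only [mul_sub]
  rw [Finset.sum_sub_distrib, neg_sub]
  rw [Finset.sum_range_succ' (fun j => (-1:ℚ) ^ j * ((n + 1).choose j : ℚ) * g j) (n + 1)]
  have h1 : ∀ j ∈ range (n + 1), (-1:ℚ) ^ (j + 1) * (((n + 1).choose (j + 1) : ℕ) : ℚ) * g (j + 1)
      = -((-1:ℚ) ^ j * (n.choose j : ℚ) * g (j + 1))
        + (-1:ℚ) ^ (j + 1) * (n.choose (j + 1) : ℚ) * g (j + 1) := by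
    intro j _; rw [Nat.choose_succ_succ]; push_cast; ring
  rw [Finset.sum_congr rfl h1, Finset.sum_add_distrib]
  rw [Finset.sum_range_succ (fun j => (-1:ℚ) ^ (j + 1) * (n.choose (j + 1) : ℚ) * g (j + 1)) n]
  rw [Finset.sum_range_succ' (fun j => (-1:ℚ) ^ j * (n.choose j : ℚ) * g j) n]
  rw [Finset.sum_neg_distrib]
  simp [Nat.choose_succ_self]
  ring

lemma key (n : ℕ) : ∀ (k : ℕ) (x : ℚ),
    ∑ j ∈ range (n + 1), (-1 : ℚ) ^ j * (n.choose j) * rf (x + j) (n + k)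
      = (-1) ^ n * (((n + k).factorial : ℚ) / (k.factorial : ℚ)) * rf (x + n) k := by
  induction n with
  | zero =>
    intro k x
    have : ((k.factorial : ℚ)) ≠ 0 := by positivity
    simp [div_self this]
  | succ n ih =>
    intro k x
    rw [show n + 1 + 1 = n + 2 from rfl,
      diff_sum n (fun j => rf (x + j) (n + 1 + k))]
    have h1 : ∀ j : ℕ, rf (x + ((j + 1 : ℕ) : ℚ)) (n + 1 + k) - rf (x + j) (n + 1 + k)
        = ((n : ℚ) + k + 1) * rf ((x + 1) + j) (n + k) := by
      intro j
      have h := rf_shift (x + j) (n + k)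
      rw [show n + 1 + k = n + k + 1 by omega]
      push_cast
      rw [show x + ((j : ℚ) + 1) = x + (j : ℚ) + 1 by ring,
        show x + 1 + (j : ℚ) = x + (j : ℚ) + 1 by ring]
      push_cast at h
      linarith [h]
    have h2 : ∀ j ∈ range (n + 1), (-1 : ℚ) ^ j * (n.choose j) *
        (rf (x + ((j + 1 : ℕ) : ℚ)) (n + 1 + k) - rf (x + j) (n + 1 + k))
        = ((n : ℚ) + k + 1) * ((-1 : ℚ) ^ j * (n.choose j) * rf ((x + 1) + j) (n + k)) := by
      intro j _
      rw [h1 j]; ring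
    rw [Finset.sum_congr rfl h2, ← Finset.mul_sum, ih k (x + 1)]
    have hx : (x + 1) + (n : ℚ) = x + (((n + 1 : ℕ) : ℚ)) := by push_cast; ring
    rw [hx]
    have hf : (((n + 1 + k).factorial : ℚ)) = ((n : ℚ) + k + 1) * ((n + k).factorial : ℚ) := by
      rw [show n + 1 + k = (n + k) + 1 by omega, Nat.factorial_succ]; push_cast; ring
    rw [hf]
    push_cast
    ring

lemma dfac_step (t : ℕ) :
    Nat.doubleFactorial (2 * t + 1) = (2 * t + 1) * Nat.doubleFactorial (2 * t - 1) := by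
  cases t with
  | zero => simp [Nat.doubleFactorial]
  | succ t =>
    rw [show 2 * (t + 1) + 1 = (2 * t + 1) + 2 by omega,
      show 2 * (t + 1) - 1 = 2 * t + 1 by omega]
    simp [Nat.doubleFactorial]

lemma dfac_ratio (j : ℕ) : ∀ m : ℕ,
    (Nat.doubleFactorial (2 * j + 2 * m - 1) : ℚ)
      = (Nat.doubleFactorial (2 * j - 1) : ℚ) * 2 ^ m * rf ((1 / 2 : ℚ) + j) m := by
  intro m
  induction m with
  | zero => simp [rf]
  | succ m ih =>
    rw [show 2 * j + 2 * (m + 1) - 1 = 2 * (j + m) + 1 by omega, dfac_step,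
      show 2 * (j + m) - 1 = 2 * j + 2 * m - 1 by omega]
    push_cast
    rw [ih]
    show _ = _ * _ * (rf ((1/2 : ℚ) + j) m * ((1/2 : ℚ) + (j : ℚ) + (m : ℚ)))
    push_cast
    ring

lemma sign_eq {n j : ℕ} (h : j ≤ n) : ((-1 : ℚ)) ^ (n - j) = (-1) ^ n * (-1) ^ j := by
  obtain ⟨d, rfl⟩ := Nat.exists_eq_add_of_le h
  rw [Nat.add_sub_cancel_left, pow_add]
  have h2 : ((-1 : ℚ)) ^ j * (-1) ^ j = 1 := by
    rw [← pow_add, ← two_mul, pow_mul]; norm_num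
  calc ((-1 : ℚ)) ^ d = (-1) ^ d * ((-1 : ℚ) ^ j * (-1) ^ j) := by rw [h2, mul_one]
    _ = (-1) ^ j * (-1) ^ d * (-1) ^ j := by ring

theorem stmt_13 (n k : ℕ) :
    ∑ j ∈ range (n + 1),
        (-1 : ℚ) ^ (n - j) * (n.choose j : ℚ) *
          (Nat.doubleFactorial (2 * n + 2 * k + 2 * j - 1) : ℚ) /
          (Nat.doubleFactorial (2 * j - 1) : ℚ) =
      (2 ^ n : ℚ) * ((n + k).factorial : ℚ) * (Nat.doubleFactorial (2 * n + 2 * k - 1) : ℚ) /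
        ((k.factorial : ℚ) * (Nat.doubleFactorial (2 * n - 1) : ℚ)) := by
  have hterm : ∀ j ∈ range (n + 1),
      (-1 : ℚ) ^ (n - j) * (n.choose j : ℚ) *
          (Nat.doubleFactorial (2 * n + 2 * k + 2 * j - 1) : ℚ) /
          (Nat.doubleFactorial (2 * j - 1) : ℚ)
        = ((-1 : ℚ) ^ n * 2 ^ (n + k)) *
          ((-1 : ℚ) ^ j * (n.choose j) * rf ((1 / 2 : ℚ) + j) (n + k)) := by
    intro j hj
    have hjn : j ≤ n := by simpa [Nat.lt_succ_iff] using hj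
    have hD : (Nat.doubleFactorial (2 * j - 1) : ℚ) ≠ 0 := by
      exact_mod_cast (Nat.doubleFactorial_pos _).ne'
    rw [show 2 * n + 2 * k + 2 * j - 1 = 2 * j + 2 * (n + k) - 1 by omega,
      dfac_ratio j (n + k), sign_eq hjn]
    field_simp
  have h2 : ((-1 : ℚ)) ^ n * (-1) ^ n = 1 := by
    rw [← pow_add, ← two_mul, pow_mul]; norm_num
  rw [Finset.sum_congr rfl hterm, ← Finset.mul_sum, key n k (1 / 2), dfac_ratio n k]
  rw [show ((-1:ℚ) ^ n * 2 ^ (n + k)) *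
      ((-1:ℚ) ^ n * (((n + k).factorial : ℚ) / (k.factorial : ℚ)) * rf ((1/2 : ℚ) + n) k)
      = ((-1:ℚ) ^ n * (-1:ℚ) ^ n) *
        (2 ^ (n + k) * (((n + k).factorial : ℚ) / (k.factorial : ℚ)) * rf ((1/2 : ℚ) + n) k)
      from by ring, h2, one_mul]
  have hD2 : (Nat.doubleFactorial (2 * n - 1) : ℚ) ≠ 0 := by
    exact_mod_cast (Nat.doubleFactorial_pos _).ne'
  have hk : ((k.factorial : ℚ)) ≠ 0 := by positivity
  rw [pow_add]
  field_simp
end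

section
/- For all natural numbers n and all complex ρ: Σ_{m=0}^{n} (-1)^m · Σ_{k=0}^{m} C(m,k) · C(n-m,k) · ρ^k equals 0 if n is odd, and equals (1-ρ)^{n/2} if n is even. -/
/-!
Writing `ρ = (ρ - 1) + 1` and reading off the coefficient of `X ^ m` in
`(C ρ + X) ^ m * (X + 1) ^ (n - m)` in two ways turns the inner sum into
`∑ j, m.choose j * (n - j).choose m * (ρ - 1) ^ j`. After exchanging the sums, the sum over `m`
of `(-1) ^ m * (n - j).choose m * m.choose j` is the coefficient of `X ^ j` in `(-X) ^ (n - j)`,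
so only `j = n - j` survives.
-/

open Finset Polynomial

variable {R : Type*} [CommRing R]

theorem coeff_C_add_X_pow_mul_X_add_one_pow (a b : ℕ) (ρ : R) :
    ((C ρ + X) ^ a * (X + 1) ^ b).coeff a =
      ∑ k ∈ range (a + 1), (a.choose k : R) * b.choose k * ρ ^ k := by
  rw [add_pow, sum_mul, finsetSum_coeff]
  refine sum_congr rfl fun k hk => ?_
  have hka : k ≤ a := Nat.lt_succ_iff.mp (mem_range.mp hk)
  rw [show C ρ ^ k * X ^ (a - k) * (a.choose k : R[X]) * (X + 1) ^ b =
      C (ρ ^ k * a.choose k) * (X ^ (a - k) * (X + 1) ^ b) by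
        simp only [map_mul, map_pow, map_natCast]; ring,
    coeff_C_mul, coeff_X_pow_mul', if_pos (Nat.sub_le a k), Nat.sub_sub_self hka,
    coeff_X_add_one_pow]
  ring

theorem coeff_C_add_X_add_one_pow_mul_X_add_one_pow (a b : ℕ) (r : R) :
    ((C r + (X + 1)) ^ a * (X + 1) ^ b).coeff a =
      ∑ j ∈ range (a + 1), (a.choose j : R) * (a + b - j).choose a * r ^ j := by
  rw [add_pow, sum_mul, finsetSum_coeff]
  refine sum_congr rfl fun j hj => ?_
  have hja : j ≤ a := Nat.lt_succ_iff.mp (mem_range.mp hj)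
  rw [show C r ^ j * (X + 1) ^ (a - j) * (a.choose j : R[X]) * (X + 1) ^ b =
      C (r ^ j * a.choose j) * (X + 1) ^ (a + b - j) by
        rw [Nat.sub_add_comm hja]; simp only [map_mul, map_pow, map_natCast, pow_add]; ring,
    coeff_C_mul, coeff_X_add_one_pow]
  ring

theorem sum_choose_mul_choose_mul_pow (a b : ℕ) (ρ : R) :
    ∑ k ∈ range (a + 1), (a.choose k : R) * b.choose k * ρ ^ k =
      ∑ j ∈ range (a + 1), (a.choose j : R) * (a + b - j).choose a * (ρ - 1) ^ j := by
  rw [← coeff_C_add_X_pow_mul_X_add_one_pow, ← coeff_C_add_X_add_one_pow_mul_X_add_one_pow]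
  congr 3
  rw [map_sub, map_one]
  ring

theorem sum_neg_one_pow_mul_choose_mul_choose (N j : ℕ) :
    ∑ m ∈ range (N + 1), (-1 : R) ^ m * N.choose m * m.choose j =
      if j = N then (-1) ^ N else 0 := by
  have hcoeff : ((-X : R[X]) ^ N).coeff j =
      ∑ m ∈ range (N + 1), (-1 : R) ^ m * N.choose m * m.choose j := by
    rw [show (-X : R[X]) = -(X + 1) + 1 by ring, add_pow, finsetSum_coeff]
    refine sum_congr rfl fun m _ => ?_
    rw [show (-(X + 1) : R[X]) ^ m * 1 ^ (N - m) * (N.choose m : R[X]) =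
        C ((-1 : R) ^ m * N.choose m) * (X + 1) ^ m by
          simp only [map_mul, map_pow, map_neg, map_one, map_natCast, neg_pow (X + 1 : R[X])]
          ring,
      coeff_C_mul, coeff_X_add_one_pow]
  rw [← hcoeff, neg_pow, ← C_1, ← C_neg, ← C_pow, coeff_C_mul, coeff_X_pow, mul_ite, mul_one,
    mul_zero]

theorem stmt_14 (n : ℕ) (ρ : ℂ) :
    ∑ m ∈ range (n + 1),
        (-1 : ℂ) ^ m * ∑ k ∈ range (m + 1), (m.choose k : ℂ) * ((n - m).choose k : ℂ) * ρ ^ k =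
      if Odd n then 0 else (1 - ρ) ^ (n / 2) := by
  have expand : ∀ m ∈ range (n + 1),
      (-1 : ℂ) ^ m * ∑ k ∈ range (m + 1), (m.choose k : ℂ) * ((n - m).choose k : ℂ) * ρ ^ k =
        ∑ j ∈ range (n + 1), (ρ - 1) ^ j * ((-1) ^ m * (n - j).choose m * m.choose j) := by
    intro m hm
    have hmn : m ≤ n := Nat.lt_succ_iff.mp (mem_range.mp hm)
    rw [sum_choose_mul_choose_mul_pow, Nat.add_sub_cancel' hmn, mul_sum]
    refine (sum_subset (range_subset_range.2 (by omega)) fun j _ hj => ?_).trans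
      (sum_congr rfl fun j _ => by ring)
    simp [Nat.choose_eq_zero_of_lt (show m < j by simpa using hj)]
  have alternate : ∀ j ∈ range (n + 1),
      ∑ m ∈ range (n + 1), (-1 : ℂ) ^ m * (n - j).choose m * m.choose j =
        if j = n - j then (-1) ^ (n - j) else 0 := by
    intro j _
    rw [← sum_neg_one_pow_mul_choose_mul_choose (R := ℂ)]
    refine (sum_subset (range_subset_range.2 (by omega)) fun m _ hm => ?_).symm
    simp [Nat.choose_eq_zero_of_lt (show n - j < m by simpa using hm)]
  rw [sum_congr rfl expand, sum_comm, sum_congr rfl fun j hj => by rw [← mul_sum, alternate j hj]]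
  obtain ⟨N, rfl | rfl⟩ := Nat.even_or_odd' n
  · rw [sum_eq_single_of_mem N (mem_range.2 (by omega))
        fun j _ hj => by rw [if_neg (by omega), mul_zero],
      if_pos (by omega), if_neg (Nat.not_odd_iff_even.2 (even_two_mul N)),
      Nat.mul_div_cancel_left N two_pos, show 2 * N - N = N by omega, ← mul_pow, mul_neg_one,
      neg_sub]
  · rw [if_pos (odd_two_mul_add_one N)]
    exact sum_eq_zero fun j _ => by rw [if_neg (by omega), mul_zero]
end

section
/- For all natural numbers n and k with n even: Σ_{m=k}^{n} (-1)^{m-k} · C(m,k) · C(n-m,k) = C(n/2, k); and for n odd the sum equals 0. -/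
/-!
With `A = (1 - X)⁻⁽ᵏ⁺¹⁾`, the generating series of `C(m, k)` is `Xᵏ A(X)` and that of
`(-1)^(m-k) C(m, k)` is `Xᵏ A(-X)`. Since `(1 - X)(1 + X) = 1 - X²`, their product is
`X²ᵏ A(X²)`, the expansion of `Xᵏ A` by `X ↦ X²`; the sum is its `n`-th coefficient.
-/

open Finset PowerSeries

namespace PowerSeries

variable (R : Type*) [CommRing R]

theorem invOneSubPow_mul_rescale_neg_one (d : ℕ) :
    (invOneSubPow R d).val * rescale (-1) (invOneSubPow R d).val =
      expand 2 two_ne_zero (invOneSubPow R d).val := by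
  set A := (invOneSubPow R d).val
  have hA : A * (1 - X) ^ d = 1 := by
    rw [← invOneSubPow_inv_eq_one_sub_pow]
    exact (invOneSubPow R d).val_inv
  have hB : rescale (-1) A * (1 + X) ^ d = 1 := by
    simpa [rescale_neg_one_X, sub_neg_eq_add] using congrArg (rescale (-1 : R)) hA
  have hC : (1 - X ^ 2) ^ d * expand 2 two_ne_zero A = 1 := by
    simpa [mul_comm] using congrArg (expand 2 two_ne_zero) hA
  have hAB : A * rescale (-1) A * (1 - X ^ 2) ^ d = 1 :=
    calc A * rescale (-1) A * (1 - X ^ 2) ^ d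
        = (A * (1 - X) ^ d) * (rescale (-1) A * (1 + X) ^ d) := by
          rw [show (1 - X ^ 2 : R⟦X⟧) = (1 - X) * (1 + X) by ring, mul_pow]
          ring
      _ = 1 := by rw [hA, hB, one_mul]
  exact left_inv_eq_right_inv hAB hC

theorem coeff_X_pow_mul_invOneSubPow (k j : ℕ) :
    coeff j (X ^ k * (invOneSubPow R (k + 1)).val) = (j.choose k : R) := by
  rw [coeff_X_pow_mul', invOneSubPow_val_succ_eq_mk_add_choose, coeff_mk]
  split_ifs with h
  · rw [Nat.add_sub_cancel' h]
  · rw [Nat.choose_eq_zero_of_lt (not_le.mp h), Nat.cast_zero]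

theorem coeff_X_pow_mul_rescale_neg_one_invOneSubPow (k j : ℕ) :
    coeff j (X ^ k * rescale (-1) (invOneSubPow R (k + 1)).val) =
      (-1) ^ (j - k) * (j.choose k : R) := by
  rw [coeff_X_pow_mul', coeff_rescale, invOneSubPow_val_succ_eq_mk_add_choose, coeff_mk]
  split_ifs with h
  · rw [Nat.add_sub_cancel' h]
  · rw [Nat.choose_eq_zero_of_lt (not_le.mp h), Nat.cast_zero, mul_zero]

end PowerSeries

theorem stmt_15 (n k : ℕ) :
    ∑ m ∈ Icc k n, (-1 : ℤ) ^ (m - k) * (m.choose k : ℤ) * ((n - m).choose k : ℤ) =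
      if Odd n then 0 else ((n / 2).choose k : ℤ) := by
  have hprod : (X ^ k * rescale (-1) (invOneSubPow ℤ (k + 1)).val) *
      (X ^ k * (invOneSubPow ℤ (k + 1)).val) =
        expand 2 two_ne_zero (X ^ k * (invOneSubPow ℤ (k + 1)).val) := by
    rw [map_mul, map_pow, expand_X, ← invOneSubPow_mul_rescale_neg_one]
    ring
  calc ∑ m ∈ Icc k n, (-1 : ℤ) ^ (m - k) * (m.choose k : ℤ) * ((n - m).choose k : ℤ)
      = ∑ m ∈ range (n + 1), (-1 : ℤ) ^ (m - k) * (m.choose k : ℤ) * ((n - m).choose k : ℤ) := by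
        refine sum_subset (fun m hm => ?_) (fun m _ hm => ?_)
        · simp only [mem_Icc, mem_range] at hm ⊢
          omega
        · have hmk : m < k := by
            simp only [mem_Icc, mem_range] at *
            omega
          rw [Nat.choose_eq_zero_of_lt hmk, Nat.cast_zero, mul_zero, zero_mul]
    _ = coeff n ((X ^ k * rescale (-1) (invOneSubPow ℤ (k + 1)).val) *
          (X ^ k * (invOneSubPow ℤ (k + 1)).val)) := by
        rw [coeff_mul, Nat.sum_antidiagonal_eq_sum_range_succ_mk]
        simp only [coeff_X_pow_mul_invOneSubPow, coeff_X_pow_mul_rescale_neg_one_invOneSubPow]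
    _ = if Odd n then 0 else ((n / 2).choose k : ℤ) := by
        rw [hprod, coeff_expand, coeff_X_pow_mul_invOneSubPow]
        rcases Nat.even_or_odd n with h | h
        · simp [h.two_dvd, Nat.not_odd_iff_even.mpr h]
        · simp [h, Nat.odd_iff.mp h, Nat.dvd_iff_mod_eq_zero]
end

section
/- For all natural numbers n: Σ_{m=0}^{n} (-1)^m · C(n,m) · (2m-1)!! · (2n-2m-1)!! equals 0 if n is odd, and equals n! · (n-1)!! · 2^{n/2} / (n/2)! if n is even. -/
open Finset

private def ff (n m : ℕ) : ℚ :=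
  (-1 : ℚ) ^ m * (n.choose m : ℚ) * (Nat.doubleFactorial (2 * m - 1) : ℚ) *
    (Nat.doubleFactorial (2 * n - 2 * m - 1) : ℚ)

private def HH (n m : ℕ) : ℚ :=
  (-1 : ℚ) ^ m * (n.choose m : ℚ) * (Nat.doubleFactorial (2 * m - 1) : ℚ) *
    (Nat.doubleFactorial (2 * (n + 1) - 2 * m - 1) : ℚ)

private def SS (n : ℕ) : ℚ := ∑ m ∈ range (n + 1), ff n m
private def VV (n : ℕ) : ℚ := ∑ m ∈ range (n + 1), (m : ℚ) * ff n m

private lemma dF_odd (j : ℕ) :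
    Nat.doubleFactorial (2 * j + 1) = (2 * j + 1) * Nat.doubleFactorial (2 * j - 1) := by
  cases j with
  | zero => rfl
  | succ j =>
    have e1 : 2 * (j + 1) + 1 = (2 * j + 1) + 2 := by ring
    have e2 : 2 * (j + 1) - 1 = 2 * j + 1 := by omega
    rw [e1, e2, Nat.doubleFactorial]

private lemma ptP (n m : ℕ) (hm : m ≤ n) :
    ff (n + 1) (m + 1) = ((2 * n : ℚ) - 4 * m) * ff n m + (HH n (m + 1) - HH n m) := by
  obtain ⟨j, rfl⟩ : ∃ j, n = m + j := ⟨n - m, by omega⟩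
  unfold ff HH
  have e1 : 2 * (m + 1) - 1 = 2 * m + 1 := by omega
  have e2 : 2 * (m + j + 1) - 2 * (m + 1) - 1 = 2 * j - 1 := by omega
  have e3 : 2 * (m + j) - 2 * m - 1 = 2 * j - 1 := by omega
  have e4 : 2 * (m + j + 1) - 2 * m - 1 = 2 * j + 1 := by omega
  rw [e1, e2, e3, e4, dF_odd, dF_odd, Nat.choose_succ_succ (m + j) m]
  push_cast
  ring

private lemma ptQ (n m : ℕ) :
    ((m : ℚ) + 1) * ff (n + 1) (m + 1) = -((n : ℚ) + 1) * (2 * m + 1) * ff n m := by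
  unfold ff
  have e1 : 2 * (m + 1) - 1 = 2 * m + 1 := by omega
  have e2 : 2 * (n + 1) - 2 * (m + 1) - 1 = 2 * n - 2 * m - 1 := by omega
  rw [e1, e2, dF_odd]
  have hc : ((n : ℚ) + 1) * (n.choose m : ℚ) = ((n + 1).choose (m + 1) : ℚ) * ((m : ℚ) + 1) := by
    exact_mod_cast congrArg (Nat.cast (R := ℚ)) (Nat.add_one_mul_choose_eq n m)
  push_cast
  linear_combination ((2 * (m : ℚ) + 1) * (-1 : ℚ) ^ m * (Nat.doubleFactorial (2 * m - 1) : ℚ) *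
    (Nat.doubleFactorial (2 * n - 2 * m - 1) : ℚ)) * hc

private lemma recS (n : ℕ) : SS (n + 1) = 2 * n * SS n - 4 * VV n := by
  have h0 : ff (n + 1) 0 = HH n 0 := by unfold ff HH; norm_num
  have hend : HH n (n + 1) = 0 := by
    unfold HH
    rw [Nat.choose_succ_self]
    push_cast
    ring
  unfold SS VV
  rw [Finset.sum_range_succ' (fun m => ff (n + 1) m) (n + 1), h0]
  rw [Finset.sum_congr rfl
    (fun m hm => ptP n m (Nat.lt_succ_iff.mp (mem_range.mp hm)))]
  rw [Finset.sum_add_distrib, Finset.sum_range_sub (fun m => HH n m), hend]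
  have hsplit : ∑ m ∈ range (n + 1), ((2 * (n : ℚ)) - 4 * m) * ff n m
      = 2 * n * (∑ m ∈ range (n + 1), ff n m)
        - 4 * ∑ m ∈ range (n + 1), (m : ℚ) * ff n m := by
    rw [Finset.mul_sum, Finset.mul_sum, ← Finset.sum_sub_distrib]
    exact Finset.sum_congr rfl fun m _ => by ring
  rw [hsplit]
  ring

private lemma recV (n : ℕ) : VV (n + 1) = -((n : ℚ) + 1) * (2 * VV n + SS n) := by
  unfold VV SS
  rw [Finset.sum_range_succ' (fun m => (m : ℚ) * ff (n + 1) m) (n + 1)]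
  simp only [Nat.cast_zero, zero_mul, add_zero]
  rw [Finset.sum_congr rfl (fun m _ => by push_cast; exact ptQ n m :
    ∀ m ∈ range (n + 1), ((m + 1 : ℕ) : ℚ) * ff (n + 1) (m + 1)
      = -((n : ℚ) + 1) * (2 * m + 1) * ff n m)]
  have key : -((n : ℚ) + 1) * (2 * (∑ m ∈ range (n + 1), (m : ℚ) * ff n m)
      + ∑ m ∈ range (n + 1), ff n m)
      = ∑ m ∈ range (n + 1), -((n : ℚ) + 1) * (2 * m + 1) * ff n m := by
    simp only [Finset.mul_sum, ← Finset.sum_add_distrib]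
    exact Finset.sum_congr rfl fun m _ => by ring
  rw [← key]

private def cc (k : ℕ) : ℚ := ((2 * k).factorial : ℚ) * ((2 * k).choose k : ℚ)

private lemma cc_succ (k : ℕ) : cc (k + 1) = 4 * (2 * (k : ℚ) + 1) ^ 2 * cc k := by
  have hb := Nat.succ_mul_centralBinom_succ k
  simp only [Nat.centralBinom] at hb
  have hk : ((k : ℚ) + 1) ≠ 0 := by positivity
  apply mul_left_cancel₀ hk
  unfold cc
  have e : 2 * (k + 1) = 2 * k + 1 + 1 := by ring
  rw [e, Nat.factorial_succ, Nat.factorial_succ]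
  have hb' : ((k : ℚ) + 1) * (((2 * k + 1 + 1).choose (k + 1)) : ℚ)
      = 2 * (2 * (k : ℚ) + 1) * (((2 * k).choose k) : ℚ) := by
    rw [show 2 * k + 1 + 1 = 2 * (k + 1) from by ring]
    exact_mod_cast congrArg (Nat.cast (R := ℚ)) hb
  push_cast
  linear_combination ((2 * (k : ℚ) + 1 + 1) * (2 * (k : ℚ) + 1) * ((2 * k).factorial : ℚ)) * hb'

private lemma fact_eq (k : ℕ) :
    (2 * k).factorial = 2 ^ k * k.factorial * Nat.doubleFactorial (2 * k - 1) := by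
  cases k with
  | zero => rfl
  | succ k =>
    have e1 : 2 * (k + 1) = 2 * k + 1 + 1 := by ring
    have e2 : 2 * (k + 1) - 1 = 2 * k + 1 := by omega
    rw [e2, e1, Nat.factorial_eq_mul_doubleFactorial, ← e1, Nat.doubleFactorial_two_mul]

private lemma main (n : ℕ) : (SS n = if n % 2 = 0 then cc (n / 2) else 0) ∧
    (VV n = if n % 2 = 0 then ((n / 2 : ℕ) : ℚ) * cc (n / 2)
      else -((n : ℚ)) ^ 2 * cc (n / 2)) := by
  induction n with
  | zero =>
    constructor
    · norm_num [SS, ff, cc, Nat.doubleFactorial]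
    · norm_num [VV, ff]
  | succ n ih =>
    obtain ⟨ihS, ihV⟩ := ih
    rcases Nat.even_or_odd n with ⟨k, rfl⟩ | ⟨k, rfl⟩
    · -- n = k + k  (even)
      rw [if_pos (show (k + k) % 2 = 0 by omega), show (k + k) / 2 = k from by omega]
        at ihS ihV
      have hc : ¬((k + k + 1) % 2 = 0) := by omega
      have hd : (k + k + 1) / 2 = k := by omega
      refine ⟨?_, ?_⟩
      · rw [if_neg hc, recS, ihS, ihV]; push_cast; ring
      · rw [if_neg hc, hd, recV, ihS, ihV]; push_cast; ring
    · -- n = 2k+1  (odd)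
      rw [if_neg (show ¬((2 * k + 1) % 2 = 0) by omega)] at ihS ihV
      rw [show (2 * k + 1) / 2 = k from by omega] at ihV
      have hc : (2 * k + 1 + 1) % 2 = 0 := by omega
      have hd : (2 * k + 1 + 1) / 2 = k + 1 := by omega
      refine ⟨?_, ?_⟩
      · rw [if_pos hc, hd, recS, ihS, ihV, cc_succ]; push_cast; ring
      · rw [if_pos hc, hd, recV, ihS, ihV, cc_succ]; push_cast; ring

theorem stmt_17 (n : ℕ) :
    ∑ m ∈ range (n + 1),
        (-1 : ℚ) ^ m * (n.choose m : ℚ) * (Nat.doubleFactorial (2 * m - 1) : ℚ) *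
          (Nat.doubleFactorial (2 * n - 2 * m - 1) : ℚ) =
      if Odd n then 0
      else (n.factorial : ℚ) * (Nat.doubleFactorial (n - 1) : ℚ) * 2 ^ (n / 2) /
        ((n / 2).factorial : ℚ) := by
  have hS : ∑ m ∈ range (n + 1),
      (-1 : ℚ) ^ m * (n.choose m : ℚ) * (Nat.doubleFactorial (2 * m - 1) : ℚ) *
        (Nat.doubleFactorial (2 * n - 2 * m - 1) : ℚ) = SS n := rfl
  rw [hS]
  rcases Nat.even_or_odd n with ⟨k, rfl⟩ | ho
  · rw [if_neg (show ¬ Odd (k + k) by rw [Nat.odd_iff]; omega)]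
    have hmain := (main (k + k)).1
    rw [if_pos (show (k + k) % 2 = 0 by omega), show (k + k) / 2 = k from by omega] at hmain
    rw [hmain, show (k + k) / 2 = k from by omega, show k + k = 2 * k from by ring]
    have hk : (k.factorial : ℚ) ≠ 0 := by positivity
    rw [eq_div_iff hk]
    unfold cc
    have h1 := Nat.choose_mul_factorial_mul_factorial (show k ≤ 2 * k by omega)
    rw [show 2 * k - k = k from by omega] at h1
    have h1' : ((2 * k).choose k : ℚ) * (k.factorial : ℚ) * (k.factorial : ℚ)
        = ((2 * k).factorial : ℚ) := by exact_mod_cast congrArg (Nat.cast (R := ℚ)) h1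
    have h2 : ((2 * k).factorial : ℚ)
        = 2 ^ k * (k.factorial : ℚ) * (Nat.doubleFactorial (2 * k - 1) : ℚ) := by
      exact_mod_cast congrArg (Nat.cast (R := ℚ)) (fact_eq k)
    linear_combination (((2 * k).choose k : ℚ) * (k.factorial : ℚ)) * h2
      + ((2 : ℚ) ^ k * (Nat.doubleFactorial (2 * k - 1) : ℚ)) * h1'
  · rw [if_pos ho]
    have hmain := (main n).1
    rw [if_neg (show ¬(n % 2 = 0) by rw [Nat.odd_iff] at ho; omega)] at hmain
    exact hmain
end

section
/- For all natural numbers n and all complex β: Σ_{m=0}^{n} (-1)^{n-m} · C(n,m) · (β)^{(m)} · (β)^{(n-m)} equals 0 if n is odd, and equals (n!/(n/2)!) · (β)^{(n/2)} if n is even. -/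
open Finset

private noncomputable def Pp (β : ℂ) (k : ℕ) : ℂ := (ascPochhammer ℂ k).eval β

private noncomputable def Ss (β : ℂ) (n : ℕ) : ℂ :=
  ∑ m ∈ range (n + 1),
    (-1 : ℂ) ^ (n - m) * (n.choose m : ℂ) * Pp β m * Pp β (n - m)

private lemma Pp_succ (β : ℂ) (k : ℕ) : Pp β (k + 1) = Pp β k * (β + k) :=
  ascPochhammer_succ_eval k β

private lemma Pp_zero (β : ℂ) : Pp β 0 = 1 := by simp [Pp]

private lemma cast_sub' {n m : ℕ} (hm : m ≤ n) : ((n - m : ℕ) : ℂ) = (n : ℂ) - m := by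
  push_cast [Nat.cast_sub hm]; ring

private lemma step1 (β : ℂ) (n : ℕ) :
    Ss β (n + 1) = ∑ m ∈ range (n + 1),
      (-1 : ℂ) ^ (n - m) * (n.choose m : ℂ) * (2 * (m : ℂ) - n) * (Pp β m * Pp β (n - m)) := by
  have hG := Finset.sum_range_succ'
      (fun m => (-1 : ℂ) ^ (n + 1 - m) * (n.choose m : ℂ) * Pp β m * Pp β (n + 1 - m)) (n + 1)
  have hGtop := Finset.sum_range_succ
      (fun m => (-1 : ℂ) ^ (n + 1 - m) * (n.choose m : ℂ) * Pp β m * Pp β (n + 1 - m)) (n + 1)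
  have hF := Finset.sum_range_succ'
      (fun m => (-1 : ℂ) ^ (n + 1 - m) * ((n + 1).choose m : ℂ) * Pp β m * Pp β (n + 1 - m)) (n + 1)
  simp only [Nat.succ_sub_succ] at hG hF
  have hSS : Ss β (n + 1)
      = ∑ m ∈ range (n + 1),
          ((-1 : ℂ) ^ (n - m) * (n.choose m : ℂ) * Pp β (m + 1) * Pp β (n - m)
            + (-1 : ℂ) ^ (n + 1 - m) * (n.choose m : ℂ) * Pp β m * Pp β (n + 1 - m)) := by
    rw [Ss, hF]
    rw [Finset.sum_add_distrib]
    have hsplit : ∀ m ∈ range (n + 1),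
        (-1 : ℂ) ^ (n - m) * (((n + 1).choose (m + 1) : ℕ) : ℂ) * Pp β (m + 1) * Pp β (n - m)
          = (-1 : ℂ) ^ (n - m) * (n.choose m : ℂ) * Pp β (m + 1) * Pp β (n - m)
            + (-1 : ℂ) ^ (n - m) * (n.choose (m + 1) : ℂ) * Pp β (m + 1) * Pp β (n - m) := by
      intro m _
      rw [Nat.choose_succ_succ']
      push_cast
      ring
    rw [Finset.sum_congr rfl hsplit, Finset.sum_add_distrib]
    have hshift : ∑ m ∈ range (n + 1),
        (-1 : ℂ) ^ (n - m) * (n.choose (m + 1) : ℂ) * Pp β (m + 1) * Pp β (n - m)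
        = (∑ m ∈ range (n + 1),
            (-1 : ℂ) ^ (n + 1 - m) * (n.choose m : ℂ) * Pp β m * Pp β (n + 1 - m))
          - (-1 : ℂ) ^ (n + 1) * (n.choose 0 : ℂ) * Pp β 0 * Pp β (n + 1) := by
      have h0 : ∑ m ∈ range (n + 2),
          (-1 : ℂ) ^ (n + 1 - m) * (n.choose m : ℂ) * Pp β m * Pp β (n + 1 - m)
          = (∑ m ∈ range (n + 1),
              (-1 : ℂ) ^ (n - m) * (n.choose (m + 1) : ℂ) * Pp β (m + 1) * Pp β (n - m))
            + (-1 : ℂ) ^ (n + 1 - 0) * (n.choose 0 : ℂ) * Pp β 0 * Pp β (n + 1 - 0) := hG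
      rw [hGtop] at h0
      simp only [Nat.choose_succ_self, Nat.cast_zero, Nat.sub_self] at h0
      rw [eq_sub_iff_add_eq]
      simp only [Nat.sub_zero] at h0 ⊢
      linear_combination -h0
    rw [hshift]
    simp only [Nat.choose_zero_right, Nat.cast_one, Pp_zero, Nat.sub_zero]
    ring
  rw [hSS]
  apply Finset.sum_congr rfl
  intro m hm
  have hm' : m ≤ n := by simpa using Nat.lt_succ_iff.mp (Finset.mem_range.mp hm)
  have h1 : n + 1 - m = (n - m) + 1 := by omega
  rw [h1, Pp_succ, Pp_succ, pow_succ, cast_sub' hm']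
  ring

private lemma step2 (β : ℂ) (n : ℕ) :
    Ss β (n + 2) = ((n : ℂ) + 1) * (2 * β + n) * Ss β n := by
  have h := step1 β (n + 1)
  have hterm : ∀ m ∈ range (n + 2),
      (-1 : ℂ) ^ (n + 1 - m) * ((n + 1).choose m : ℂ) * (2 * (m : ℂ) - ((n + 1 : ℕ) : ℂ)) *
          (Pp β m * Pp β (n + 1 - m))
      = (-1 : ℂ) ^ (n + 1 - m) * ((m * (n + 1).choose m : ℕ) : ℂ) * (Pp β m * Pp β (n + 1 - m))
        - (-1 : ℂ) ^ (n + 1 - m) * (((n + 1 - m) * (n + 1).choose m : ℕ) : ℂ) *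
            (Pp β m * Pp β (n + 1 - m)) := by
    intro m hm
    have hm' : m ≤ n + 1 := Nat.lt_succ_iff.mp (Finset.mem_range.mp hm)
    push_cast [cast_sub' hm']
    ring
  rw [h, Finset.sum_congr rfl hterm, Finset.sum_sub_distrib]
  -- B1
  have hB1 := Finset.sum_range_succ'
      (fun m => (-1 : ℂ) ^ (n + 1 - m) * ((m * (n + 1).choose m : ℕ) : ℂ) *
        (Pp β m * Pp β (n + 1 - m))) (n + 1)
  simp only [Nat.succ_sub_succ, Nat.zero_mul, Nat.cast_zero, mul_zero, zero_mul, add_zero,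
    Nat.sub_zero] at hB1
  -- B2
  have hB2 := Finset.sum_range_succ
      (fun m => (-1 : ℂ) ^ (n + 1 - m) * (((n + 1 - m) * (n + 1).choose m : ℕ) : ℂ) *
        (Pp β m * Pp β (n + 1 - m))) (n + 1)
  simp only [Nat.sub_self, Nat.zero_mul, Nat.cast_zero, mul_zero, zero_mul, add_zero] at hB2
  rw [hB1, hB2]
  have e1 : ∀ m ∈ range (n + 1),
      (-1 : ℂ) ^ (n - m) * (((m + 1) * (n + 1).choose (m + 1) : ℕ) : ℂ) *
        (Pp β (m + 1) * Pp β (n - m))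
      = ((n : ℂ) + 1) * ((-1 : ℂ) ^ (n - m) * (n.choose m : ℂ) * (Pp β m * Pp β (n - m)) * (β + m)) := by
    intro m hm
    have hc : (m + 1) * (n + 1).choose (m + 1) = (n + 1) * n.choose m := by
      rw [mul_comm]
      exact (Nat.add_one_mul_choose_eq n m).symm
    rw [hc, Pp_succ]
    push_cast
    ring
  have e2 : ∀ m ∈ range (n + 1),
      (-1 : ℂ) ^ (n + 1 - m) * (((n + 1 - m) * (n + 1).choose m : ℕ) : ℂ) *
        (Pp β m * Pp β (n + 1 - m))
      = -(((n : ℂ) + 1) * ((-1 : ℂ) ^ (n - m) * (n.choose m : ℂ) * (Pp β m * Pp β (n - m)) *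
          (β + ((n : ℂ) - m)))) := by
    intro m hm
    have hm' : m ≤ n := Nat.lt_succ_iff.mp (Finset.mem_range.mp hm)
    have hc : (n + 1 - m) * (n + 1).choose m = (n + 1) * n.choose m := by
      rw [mul_comm, ← Nat.choose_mul_succ_eq]
      exact mul_comm _ _
    have h1 : n + 1 - m = (n - m) + 1 := by omega
    rw [hc, h1, Pp_succ, pow_succ, cast_sub' hm']
    push_cast
    ring
  rw [Finset.sum_congr rfl e1, Finset.sum_congr rfl e2]
  rw [Ss, Finset.mul_sum, ← Finset.sum_sub_distrib]
  apply Finset.sum_congr rfl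
  intro m hm
  have hm' : m ≤ n := Nat.lt_succ_iff.mp (Finset.mem_range.mp hm)
  ring

private lemma Ss_zero (β : ℂ) : Ss β 0 = 1 := by
  simp [Ss, Pp_zero]

private lemma Ss_one (β : ℂ) : Ss β 1 = 0 := by
  simp [Ss, Finset.sum_range_succ, Pp_zero]

private lemma Ss_odd (β : ℂ) : ∀ k, Ss β (2 * k + 1) = 0 := by
  intro k
  induction k with
  | zero => simpa using Ss_one β
  | succ k ih =>
      have h : 2 * (k + 1) + 1 = (2 * k + 1) + 2 := by ring
      rw [h, step2, ih, mul_zero]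

private lemma Ss_even (β : ℂ) : ∀ k,
    Ss β (2 * k) = ((2 * k).factorial : ℂ) / (k.factorial : ℂ) * Pp β k := by
  intro k
  induction k with
  | zero => simpa [Pp_zero] using Ss_zero β
  | succ k ih =>
      have h : 2 * (k + 1) = 2 * k + 2 := by ring
      rw [h, step2, ih]
      have hfac : ((2 * k + 2).factorial : ℂ)
          = (2 * (k : ℂ) + 2) * ((2 * (k : ℂ) + 1) * ((2 * k).factorial : ℂ)) := by
        rw [show 2 * k + 2 = (2 * k + 1) + 1 from rfl, Nat.factorial_succ, Nat.factorial_succ]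
        push_cast
        ring
      rw [Pp_succ, hfac, Nat.factorial_succ]
      have h1 : ((k.factorial : ℕ) : ℂ) ≠ 0 := Nat.cast_ne_zero.mpr k.factorial_ne_zero
      have h2 : ((k : ℂ) + 1) ≠ 0 := by
        exact_mod_cast Nat.succ_ne_zero k
      push_cast
      field_simp

theorem stmt_18 (n : ℕ) (β : ℂ) :
    ∑ m ∈ range (n + 1),
        (-1 : ℂ) ^ (n - m) * (n.choose m : ℂ) * (ascPochhammer ℂ m).eval β *
          (ascPochhammer ℂ (n - m)).eval β =
      if Odd n then 0
      else (n.factorial : ℂ) / ((n / 2).factorial : ℂ) * (ascPochhammer ℂ (n / 2)).eval β := by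
  show Ss β n = _
  rcases Nat.even_or_odd n with ⟨k, hk⟩ | hodd
  · have hn : n = 2 * k := by omega
    have hne : ¬ Odd n := by simp [Nat.not_odd_iff_even, hn, even_two_mul]
    rw [if_neg hne, hn]
    have hdiv : 2 * k / 2 = k := by omega
    rw [hdiv]
    exact Ss_even β k
  · obtain ⟨k, hk⟩ := hodd
    rw [if_pos ⟨k, hk⟩, hk]
    exact Ss_odd β k
end

section
/- For all natural numbers n, k with k ≤ n and all complex β: Σ_{m=k}^{n} (-1)^{m-k} · (n-k)!/((m-k)!(n-m-k)!) · (β)^{(m)} · (β)^{(n-m)} equals 0 if n is odd, and equals (n/2)! · C(n-k, n/2) · (β)^{(k)} · (β)^{(n/2)} if n is even, where in the sum terms with n-m < k are interpreted as zero. -/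
open Finset Polynomial

noncomputable def Tsum (x : ℂ) (N : ℕ) : ℂ :=
  ∑ j ∈ range (N+1), (-1:ℂ)^j * (N.choose j : ℂ) *
    (ascPochhammer ℂ j).eval x * (ascPochhammer ℂ (N-j)).eval x

lemma poch_add (a b : ℕ) (x : ℂ) :
    (ascPochhammer ℂ (a+b)).eval x
      = (ascPochhammer ℂ a).eval x * (ascPochhammer ℂ b).eval (x + a) := by
  rw [← ascPochhammer_mul]
  simp [Polynomial.eval_comp]

lemma Tsum_zero (x : ℂ) : Tsum x 0 = 1 := by simp [Tsum]

lemma Tsum_one (x : ℂ) : Tsum x 1 = 0 := by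
  simp [Tsum, Finset.sum_range_succ]

lemma L1 (x : ℂ) (M : ℕ) :
    Tsum x (M+1)
      = ∑ j ∈ range (M+1), (-1:ℂ)^j * (M.choose j : ℂ) *
          (ascPochhammer ℂ j).eval x * (ascPochhammer ℂ (M-j)).eval x *
          (((M-j : ℕ) : ℂ) - (j : ℂ)) := by
  set P : ℕ → ℂ := fun j => (ascPochhammer ℂ j).eval x with hP
  have peval : ∀ j : ℕ, P (j+1) = P j * (x + j) := by
    intro j; simp [hP, ascPochhammer_succ_eval]
  set f : ℕ → ℂ := fun j => (-1:ℂ)^j * ((M+1).choose j : ℂ) * P j * P (M+1-j) with hf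
  set a : ℕ → ℂ := fun j => (-1:ℂ)^j * (M.choose j : ℂ) * P j * P (M+1-j) with ha
  set b : ℕ → ℂ := fun j => (-1:ℂ)^j * (M.choose j : ℂ) * P (j+1) * P (M-j) with hb
  have key : ∑ j ∈ range (M+2), f j
      = (∑ j ∈ range (M+2), a j) - (∑ j ∈ range (M+1), b j) := by
    rw [Finset.sum_range_succ' f (M+1), Finset.sum_range_succ' a (M+1)]
    have h0 : f 0 = a 0 := by simp [hf, ha]
    have hstep : ∀ j ∈ range (M+1), f (j+1) = a (j+1) - b j := by
      intro j hj
      rw [Finset.mem_range] at hj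
      have h1 : M + 1 - (j+1) = M - j := by omega
      simp only [hf, ha, hb, h1, Nat.choose_succ_succ]
      push_cast
      ring
    rw [Finset.sum_congr rfl hstep, Finset.sum_sub_distrib, h0]
    try ring
  have hdrop : ∑ j ∈ range (M+2), a j = ∑ j ∈ range (M+1), a j := by
    rw [Finset.sum_range_succ]
    simp [ha, Nat.choose_succ_self]
  have : Tsum x (M+1) = ∑ j ∈ range (M+1), (a j - b j) := by
    rw [Tsum, Finset.sum_sub_distrib, ← hdrop, ← key]
  rw [this]
  apply Finset.sum_congr rfl
  intro j hj
  rw [Finset.mem_range] at hj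
  have h1 : M + 1 - j = (M - j) + 1 := by omega
  simp only [ha, hb, h1, peval]
  ring

lemma L2 (x : ℂ) (N : ℕ) :
    (∑ j ∈ range (N+2), (-1:ℂ)^j * ((N+1).choose j : ℂ) *
        (ascPochhammer ℂ j).eval x * (ascPochhammer ℂ (N+1-j)).eval x *
        (((N+1-j : ℕ) : ℂ) - (j : ℂ)))
      = ((N:ℂ)+1) * (2*x + N) * Tsum x N := by
  set P : ℕ → ℂ := fun j => (ascPochhammer ℂ j).eval x with hP
  have peval : ∀ j : ℕ, P (j+1) = P j * (x + j) := by
    intro j; simp [hP, ascPochhammer_succ_eval]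
  set f : ℕ → ℂ := fun j => (-1:ℂ)^j * ((N+1).choose j : ℂ) * P j * P (N+1-j) *
      (((N+1-j : ℕ) : ℂ) - (j : ℂ)) with hf
  set a : ℕ → ℂ := fun j => (-1:ℂ)^j * (((N:ℂ)+1) * (N.choose j : ℂ)) * P j * P (N+1-j) with ha
  set b : ℕ → ℂ := fun j => (-1:ℂ)^j * (((N:ℂ)+1) * (N.choose j : ℂ)) * P (j+1) * P (N-j) with hb
  -- split the weight
  have key : ∑ j ∈ range (N+2), f j
      = (∑ j ∈ range (N+2), a j) + (∑ j ∈ range (N+1), b j) := by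
    rw [Finset.sum_range_succ' f (N+1), Finset.sum_range_succ' a (N+1)]
    have h0 : f 0 = a 0 := by
      have : ((N+1).choose 0 : ℂ) = 1 := by norm_num
      simp only [hf, ha, Nat.sub_zero, Nat.choose_zero_right]
      push_cast
      ring
    have hstep : ∀ j ∈ range (N+1), f (j+1) = a (j+1) + b j := by
      intro j hj
      rw [Finset.mem_range] at hj
      have h1 : N + 1 - (j+1) = N - j := by omega
      -- (N+1-(j+1)) * C(N+1,j+1) = (N+1) * C(N,j+1)  and (j+1)*C(N+1,j+1) = (N+1)*C(N,j)
      have e1 : ((N+1).choose (j+1)) * (N - j) = (N + 1) * (N.choose (j+1)) := by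
        rw [show N - j = N + 1 - (j+1) by omega, ← Nat.choose_mul_succ_eq]
        ring
      have e2 : (N+1) * (N.choose j) = ((N+1).choose (j+1)) * (j+1) :=
        Nat.add_one_mul_choose_eq N j
      have e1'' : (((N+1).choose (j+1) : ℂ)) * ((N - j : ℕ) : ℂ)
          = ((N:ℂ)+1) * (N.choose (j+1) : ℂ) := by exact_mod_cast e1
      have e2'' : (((N+1).choose (j+1) : ℂ)) * ((j:ℂ)+1)
          = ((N:ℂ)+1) * (N.choose j : ℂ) := by exact_mod_cast e2.symm
      simp only [hf, ha, hb, h1]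
      push_cast
      linear_combination ((-1:ℂ)^(j+1) * P (j+1) * P (N-j)) * e1''
        - ((-1:ℂ)^(j+1) * P (j+1) * P (N-j)) * e2''
    rw [Finset.sum_congr rfl hstep, Finset.sum_add_distrib, h0]
    try ring
  have hdrop : ∑ j ∈ range (N+2), a j = ∑ j ∈ range (N+1), a j := by
    rw [Finset.sum_range_succ]
    simp [ha, Nat.choose_succ_self]
  rw [key, hdrop, ← Finset.sum_add_distrib, Tsum, Finset.mul_sum]
  apply Finset.sum_congr rfl
  intro j hj
  rw [Finset.mem_range] at hj
  have h1 : N + 1 - j = (N - j) + 1 := by omega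
  have h2 : ((N - j : ℕ) : ℂ) + (j : ℂ) = (N : ℂ) := by
    have : (N - j) + j = N := by omega
    exact_mod_cast congrArg (fun t : ℕ => (t : ℂ)) this
  simp only [ha, hb, h1, peval]
  linear_combination ((-1:ℂ)^j * ((N:ℂ)+1) * (N.choose j : ℂ) * P j * P (N-j)) * h2

lemma Tsum_rec (x : ℂ) (N : ℕ) : Tsum x (N+2) = ((N:ℂ)+1) * (2*x + N) * Tsum x N := by
  rw [show N + 2 = (N+1) + 1 from rfl, L1, ← L2]

lemma Tsum_closed (x : ℂ) : ∀ N, Tsum x N =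
    if Odd N then 0
    else ((N.factorial : ℂ) / ((N/2).factorial : ℂ)) * (ascPochhammer ℂ (N/2)).eval x := by
  intro N
  induction N using Nat.strong_induction_on with
  | _ N ih =>
    match N with
    | 0 => simp [Tsum_zero]
    | 1 => simp [Tsum_one, Nat.odd_iff]
    | (n+2) =>
      rw [Tsum_rec, ih n (by omega)]
      by_cases h : Odd n
      · have h2 : Odd (n+2) := by
          rcases h with ⟨t, ht⟩; exact ⟨t+1, by omega⟩
        rw [if_pos h, if_pos h2, mul_zero]
      · have h2 : ¬ Odd (n+2) := by
          simp only [Nat.odd_iff] at h ⊢; omega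
        rw [if_neg h, if_neg h2]
        have hm : n = 2 * (n/2) := by
          simp only [Nat.odd_iff] at h; omega
        set m := n/2 with hmdef
        have h3 : (n+2)/2 = m + 1 := by omega
        rw [h3]
        have hc : (n : ℂ) = 2 * (m : ℂ) := by exact_mod_cast congrArg (Nat.cast : ℕ → ℂ) hm
        have f1 : ((n+2).factorial : ℂ) = ((n:ℂ)+2)*((n:ℂ)+1)*(n.factorial:ℂ) := by
          rw [show n+2 = (n+1)+1 from rfl, Nat.factorial_succ, Nat.factorial_succ]
          push_cast; ring
        have f2 : ((m+1).factorial : ℂ) = ((m:ℂ)+1)*(m.factorial : ℂ) := by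
          rw [Nat.factorial_succ]; push_cast; ring
        rw [ascPochhammer_succ_eval, f1, f2]
        have hnf : (n.factorial : ℂ) ≠ 0 := by
          exact_mod_cast Nat.factorial_ne_zero n
        have hmf : (m.factorial : ℂ) ≠ 0 := by
          exact_mod_cast Nat.factorial_ne_zero m
        have hm1 : ((m:ℂ)+1) ≠ 0 := by
          exact Nat.cast_add_one_ne_zero m
        field_simp
        rw [hc]
        ring

theorem stmt_19 (n k : ℕ) (hk : k ≤ n) (β : ℂ) :
    ∑ m ∈ Icc k n,
        (if k + m ≤ n then
          (-1 : ℂ) ^ (m - k) * ((n - k).factorial : ℂ) /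
              (((m - k).factorial : ℂ) * ((n - m - k).factorial : ℂ)) *
            (ascPochhammer ℂ m).eval β * (ascPochhammer ℂ (n - m)).eval β
        else 0) =
      if Odd n then 0
      else ((n / 2).factorial : ℂ) * ((n - k).choose (n / 2) : ℂ) *
        (ascPochhammer ℂ k).eval β * (ascPochhammer ℂ (n / 2)).eval β := by
  by_cases h2k : 2 * k ≤ n
  · -- main case
    set N := n - 2*k with hN
    -- restrict the sum to Icc k (n-k)
    have hsub : Icc k (n-k) ⊆ Icc k n := by
      apply Finset.Icc_subset_Icc_right; omega
    rw [← Finset.sum_subset hsub (by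
      intro m hm hm'
      rw [Finset.mem_Icc] at hm
      rw [Finset.mem_Icc] at hm'
      rw [if_neg (by omega)])]
    have hcongr : ∀ m ∈ Icc k (n-k),
        (if k + m ≤ n then
          (-1 : ℂ) ^ (m - k) * ((n - k).factorial : ℂ) /
              (((m - k).factorial : ℂ) * ((n - m - k).factorial : ℂ)) *
            (ascPochhammer ℂ m).eval β * (ascPochhammer ℂ (n - m)).eval β
        else 0)
        = (-1 : ℂ) ^ (m - k) * ((n - k).factorial : ℂ) /
              (((m - k).factorial : ℂ) * ((n - m - k).factorial : ℂ)) *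
            (ascPochhammer ℂ m).eval β * (ascPochhammer ℂ (n - m)).eval β := by
      intro m hm
      rw [Finset.mem_Icc] at hm
      rw [if_pos (by omega)]
    rw [Finset.sum_congr rfl hcongr]
    rw [show Icc k (n-k) = Ico k (n-k+1) from (Finset.Ico_add_one_right_eq_Icc k (n-k)).symm]
    rw [Finset.sum_Ico_eq_sum_range]
    rw [show n - k + 1 - k = N + 1 by omega]
    set C0 : ℂ := ((n-k).factorial : ℂ)/(N.factorial : ℂ) *
        ((ascPochhammer ℂ k).eval β)^2 with hC0
    have hterm : ∀ j ∈ range (N+1),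
        (-1 : ℂ) ^ (k + j - k) * ((n - k).factorial : ℂ) /
              (((k + j - k).factorial : ℂ) * ((n - (k+j) - k).factorial : ℂ)) *
            (ascPochhammer ℂ (k+j)).eval β * (ascPochhammer ℂ (n - (k+j))).eval β
        = C0 * ((-1:ℂ)^j * (N.choose j : ℂ) *
            (ascPochhammer ℂ j).eval (β+k) * (ascPochhammer ℂ (N-j)).eval (β+k)) := by
      intro j hj
      rw [Finset.mem_range] at hj
      rw [show k + j - k = j by omega, show n - (k+j) - k = N - j by omega,
        show n - (k+j) = k + (N - j) by omega, poch_add, poch_add]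
      have hcb : (N.choose j) * j.factorial * (N-j).factorial = N.factorial :=
        Nat.choose_mul_factorial_mul_factorial (show j ≤ N by omega)
      have hcb' : (N.choose j : ℂ) * (j.factorial : ℂ) * ((N-j).factorial : ℂ)
          = (N.factorial : ℂ) := by exact_mod_cast hcb
      have hjf : (j.factorial : ℂ) ≠ 0 := by exact_mod_cast Nat.factorial_ne_zero j
      have hNjf : ((N-j).factorial : ℂ) ≠ 0 := by exact_mod_cast Nat.factorial_ne_zero (N-j)
      have hNf : (N.factorial : ℂ) ≠ 0 := by exact_mod_cast Nat.factorial_ne_zero N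
      rw [hC0]
      field_simp
      rw [← hcb']
      ring
    rw [Finset.sum_congr rfl hterm, ← Finset.mul_sum]
    have : ∑ j ∈ range (N+1), ((-1:ℂ)^j * (N.choose j : ℂ) *
        (ascPochhammer ℂ j).eval (β+k) * (ascPochhammer ℂ (N-j)).eval (β+k))
        = Tsum (β+k) N := rfl
    rw [this, Tsum_closed]
    have hodd : Odd n ↔ Odd N := by
      simp only [Nat.odd_iff]; omega
    by_cases ho : Odd n
    · rw [if_pos (hodd.mp ho), if_pos ho, mul_zero]
    · rw [if_neg (fun hh => ho (hodd.mpr hh)), if_neg ho]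
      have hhalf : n / 2 = k + N / 2 := by
        simp only [Nat.odd_iff] at ho; omega
      rw [hhalf, poch_add]
      have hNhalf : N - N/2 = N/2 := by
        simp only [Nat.odd_iff] at ho; omega
      have hcb : ((n-k).choose (n/2)) * (n/2).factorial * (n - k - n/2).factorial
          = (n-k).factorial := Nat.choose_mul_factorial_mul_factorial
            (show n/2 ≤ n - k by simp only [Nat.odd_iff] at ho; omega)
      rw [hhalf] at hcb
      rw [show n - k - (k + N/2) = N/2 by omega] at hcb
      have hcb' : (((n-k).choose (k + N/2)) : ℂ) * ((k + N/2).factorial : ℂ)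
          * ((N/2).factorial : ℂ) = ((n-k).factorial : ℂ) := by exact_mod_cast hcb
      have h1 : ((N/2).factorial : ℂ) ≠ 0 := by exact_mod_cast Nat.factorial_ne_zero _
      have h2 : ((k+N/2).factorial : ℂ) ≠ 0 := by exact_mod_cast Nat.factorial_ne_zero _
      have h3 : (N.factorial : ℂ) ≠ 0 := by exact_mod_cast Nat.factorial_ne_zero _
      rw [hC0]
      field_simp
      rw [← hcb']
      ring
  · -- degenerate case n < 2k
    have hz : ∀ m ∈ Icc k n,
        (if k + m ≤ n then
          (-1 : ℂ) ^ (m - k) * ((n - k).factorial : ℂ) /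
              (((m - k).factorial : ℂ) * ((n - m - k).factorial : ℂ)) *
            (ascPochhammer ℂ m).eval β * (ascPochhammer ℂ (n - m)).eval β
        else 0) = 0 := by
      intro m hm
      rw [Finset.mem_Icc] at hm
      rw [if_neg (by omega)]
    rw [Finset.sum_eq_zero hz]
    by_cases ho : Odd n
    · rw [if_pos ho]
    · rw [if_neg ho]
      have : (n-k).choose (n/2) = 0 := by
        apply Nat.choose_eq_zero_of_lt
        simp only [Nat.odd_iff] at ho; omega
      simp [this]
end
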